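/- arXiv:2407.13344 — 9 statements merged into one kernel-verified Lean document; each statement's English description precedes it below -/
import Mathlib

section
/- Let E, E' be real Hausdorff locally convex topological vector spaces whose continuous linear functionals separate points, let X ⊆ E and Y ⊆ E' be nonempty compact convex sets, and let π : X → Y be a continuous affine map with π(X) = Y. If y ∈ Y is an extreme point of Y, then every extreme point of the compact convex set π⁻¹({y}) ⊆ X is an extreme point of X; consequently, every extreme point of Y is the image under π of some extreme point of X, i.e., extremePoints ℝ Y ⊆ π(extremePoints ℝ X). -/
open Set

/-- For a continuous affine surjection `π` between compact convex sets, extreme points of a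
fiber over an extreme point of `Y` are extreme in `X`; consequently every extreme point of `Y`
is the image of an extreme point of `X`. -/
theorem extremePoints_of_fiber_and_image
    {E : Type*} [AddCommGroup E] [Module ℝ E] [TopologicalSpace E]
    [IsTopologicalAddGroup E] [ContinuousSMul ℝ E] [T2Space E]
    [LocallyConvexSpace ℝ E] [SeparatingDual ℝ E]
    {E' : Type*} [AddCommGroup E'] [Module ℝ E'] [TopologicalSpace E']
    [IsTopologicalAddGroup E'] [ContinuousSMul ℝ E'] [T2Space E']
    [LocallyConvexSpace ℝ E'] [SeparatingDual ℝ E']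
    (X : Set E) (hXne : X.Nonempty) (hXcomp : IsCompact X) (hXconv : Convex ℝ X)
    (Y : Set E') (hYne : Y.Nonempty) (hYcomp : IsCompact Y) (hYconv : Convex ℝ Y)
    (π : E → E') (hπcont : ContinuousOn π X)
    (hπaff : ∀ x ∈ X, ∀ y ∈ X, ∀ t ∈ Icc (0:ℝ) 1,
      π (t • x + (1 - t) • y) = t • π x + (1 - t) • π y)
    (hπsurj : π '' X = Y) :
    (∀ y ∈ Set.extremePoints ℝ Y,
      Set.extremePoints ℝ (X ∩ π ⁻¹' {y}) ⊆ Set.extremePoints ℝ X) ∧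
    Set.extremePoints ℝ Y ⊆ π '' (Set.extremePoints ℝ X) := by
  have key : ∀ y ∈ Set.extremePoints ℝ Y,
      Set.extremePoints ℝ (X ∩ π ⁻¹' {y}) ⊆ Set.extremePoints ℝ X := by
    intro y hy p hp
    obtain ⟨⟨hpX, hpF⟩, hpext⟩ := hp
    refine ⟨hpX, ?_⟩
    intro x₁ hx₁ x₂ hx₂ hseg
    have hpy : π p = y := hpF
    have h1 : π x₁ ∈ Y := hπsurj ▸ mem_image_of_mem π hx₁
    have h2 : π x₂ ∈ Y := hπsurj ▸ mem_image_of_mem π hx₂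
    obtain ⟨a, b, ha, hb, hab, hcomb⟩ := hseg
    have hb' : b = 1 - a := by linarith
    have heq : a • π x₁ + (1 - a) • π x₂ = y := by
      rw [← hπaff x₁ hx₁ x₂ hx₂ a ⟨ha.le, by linarith⟩]
      rw [hb'] at hcomb
      rw [hcomb, hpy]
    have hseg' : y ∈ openSegment ℝ (π x₁) (π x₂) := ⟨a, 1 - a, ha, by linarith, by ring, heq⟩
    have hy1 : π x₁ = y := hy.2 h1 h2 hseg'
    have hy2 : π x₂ = y := hy.2 h2 h1 (openSegment_symm ℝ (π x₁) (π x₂) ▸ hseg')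
    refine hpext ⟨hx₁, hy1⟩ ⟨hx₂, hy2⟩ ⟨a, b, ha, hb, hab, hcomb⟩
  refine ⟨key, ?_⟩
  intro y hy
  set F : Set E := X ∩ π ⁻¹' {y} with hF
  have hFne : F.Nonempty := by
    obtain ⟨x, hx, hxy⟩ : y ∈ π '' X := hπsurj ▸ hy.1
    exact ⟨x, hx, hxy⟩
  have hFclosed : IsClosed F := by
    have : IsClosed ({y} : Set E') := isClosed_singleton
    exact hπcont.preimage_isClosed_of_isClosed hXcomp.isClosed this
  have hFcomp : IsCompact F := hXcomp.of_isClosed_subset hFclosed inter_subset_left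
  obtain ⟨p, hp⟩ := hFcomp.extremePoints_nonempty hFne
  refine ⟨p, key y hy hp, hp.1.2⟩
end

section
/- Let E be a real Hausdorff locally convex topological vector space whose continuous linear functionals separate points, let X ⊆ E be a nonempty compact convex set, and let p be an extreme point of X. Then the sets {x ∈ X : φ(x) > 0}, where φ ranges over continuous affine functions on X with φ(p) > 0, form a basis of neighborhoods of p in X: for every subset U of X that is a neighborhood of p in X, there exists a continuous affine φ : X → ℝ with φ(p) > 0 and {x ∈ X : φ(x) > 0} ⊆ U. -/
/-!
Milman's argument: if `K ⊆ X` is compact and misses the extreme point `p`, cover `K` by finitely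
many pieces `K ∩ (x + V)`, `x ∈ K`, where `V` is a closed convex neighbourhood of `0` with
`(p - V) ∩ K = ∅`. The convex hull of the union of their closed convex hulls is compact, hence
contains `closure (convexHull K)`, and an extreme point of `X` lying in it must lie in one of the
pieces, hence in some `x + V`, which is impossible. So `p ∉ closure (convexHull (X \ O))` for
an open `O ∋ p`, and a Hahn–Banach functional separating `p` from this set gives the half-space.
-/

open Set Pointwise Topology

section

variable {E : Type*} [AddCommGroup E] [Module ℝ E] [TopologicalSpace E]
    [IsTopologicalAddGroup E] [ContinuousSMul ℝ E]

theorem IsCompact.convexJoin {s t : Set E} (hs : IsCompact s) (ht : IsCompact t) :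
    IsCompact (convexJoin ℝ s t) := by
  have : _root_.convexJoin ℝ s t =
      (fun q : E × E × ℝ => AffineMap.lineMap q.1 q.2.1 q.2.2) '' (s ×ˢ t ×ˢ Icc 0 1) := by
    ext z
    simp only [mem_convexJoin, segment_eq_image_lineMap, mem_image, mem_prod, Prod.exists]
    grind
  rw [this]
  exact (hs.prod (ht.prod isCompact_Icc)).image <| by
    simp only [AffineMap.lineMap_apply_module]; fun_prop

theorem isCompact_convexHull_union {s t : Set E} (hs : IsCompact (convexHull ℝ s))
    (ht : IsCompact (convexHull ℝ t)) : IsCompact (convexHull ℝ (s ∪ t)) := by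
  rcases s.eq_empty_or_nonempty with rfl | hs₀
  · simpa using ht
  rcases t.eq_empty_or_nonempty with rfl | ht₀
  · simpa using hs
  rw [convexHull_union hs₀ ht₀]
  exact hs.convexJoin ht

theorem Finset.isCompact_convexHull_biUnion {ι : Type*} (u : Finset ι) {C : ι → Set E}
    (hC : ∀ i ∈ u, IsCompact (convexHull ℝ (C i))) :
    IsCompact (convexHull ℝ (⋃ i ∈ u, C i)) := by
  classical
  induction u using Finset.induction_on with
  | empty => simp
  | insert i u _ ih =>
    rw [Finset.set_biUnion_insert]
    exact isCompact_convexHull_union (hC i (mem_insert_self i u))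
      (ih fun j hj => hC j (mem_insert_of_mem hj))

theorem exists_isClosed_convex_subset_of_mem_nhds_zero [LocallyConvexSpace ℝ E] {W : Set E}
    (hW : W ∈ 𝓝 0) : ∃ V ∈ 𝓝 (0 : E), IsClosed V ∧ Convex ℝ V ∧ V ⊆ W := by
  obtain ⟨F, hF, hFclosed, hFW⟩ := exists_mem_nhds_isClosed_subset hW
  obtain ⟨V, ⟨hV, hVconv⟩, hVF⟩ := (LocallyConvexSpace.convex_basis_zero ℝ E).mem_iff.1 hF
  exact ⟨closure V, Filter.mem_of_superset hV subset_closure, isClosed_closure, hVconv.closure,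
    (closure_minimal hVF hFclosed).trans hFW⟩

end

theorem mem_of_mem_convexHull_of_mem_extremePoints {E : Type*} [AddCommGroup E] [Module ℝ E]
    {X A : Set E} {p : E} (hX : Convex ℝ X) (hAX : A ⊆ X) (hp : p ∈ X.extremePoints ℝ)
    (hpA : p ∈ convexHull ℝ A) : p ∈ A :=
  extremePoints_convexHull_subset <|
    inter_extremePoints_subset_extremePoints_of_subset (convexHull_min hAX hX) ⟨hpA, hp⟩

theorem notMem_closure_convexHull_of_mem_extremePoints {E : Type*} [AddCommGroup E] [Module ℝ E]
    [TopologicalSpace E] [IsTopologicalAddGroup E] [ContinuousSMul ℝ E] [T2Space E]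
    [LocallyConvexSpace ℝ E] {X K : Set E} {p : E} (hXcomp : IsCompact X) (hXconv : Convex ℝ X)
    (hp : p ∈ X.extremePoints ℝ) (hKX : K ⊆ X) (hK : IsCompact K) (hpK : p ∉ K) :
    p ∉ closure (convexHull ℝ K) := by
  intro hpK'
  have hW : (p - ·) ⁻¹' Kᶜ ∈ 𝓝 (0 : E) :=
    (continuous_const.sub continuous_id).continuousAt.preimage_mem_nhds <|
      hK.isClosed.isOpen_compl.mem_nhds (by simpa using hpK)
  obtain ⟨V, hV, hVclosed, hVconv, hVK⟩ := exists_isClosed_convex_subset_of_mem_nhds_zero hW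
  obtain ⟨s, hsK, hKs⟩ :=
    hK.elim_nhds_subcover (fun x => x +ᵥ V) fun x _ => by simpa using vadd_mem_nhds_vadd x hV
  set C : E → Set E := fun x => closure (convexHull ℝ (K ∩ (x +ᵥ V)))
  have hCX (x : E) : C x ⊆ X :=
    closure_minimal (convexHull_min (inter_subset_left.trans hKX) hXconv) hXcomp.isClosed
  have hCV (x : E) : C x ⊆ x +ᵥ V :=
    closure_minimal (convexHull_min inter_subset_right (hVconv.vadd x)) (hVclosed.vadd x)
  have hC (x : E) : IsCompact (convexHull ℝ (C x)) := by
    rw [(convex_convexHull ℝ _).closure.convexHull_eq]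
    exact hXcomp.of_isClosed_subset isClosed_closure (hCX x)
  have hKC : closure (convexHull ℝ K) ⊆ convexHull ℝ (⋃ x ∈ s, C x) := by
    refine closure_minimal (convexHull_mono fun y hy => ?_)
      (s.isCompact_convexHull_biUnion fun x _ => hC x).isClosed
    obtain ⟨x, hxs, hyx⟩ := mem_iUnion₂.1 (hKs hy)
    exact mem_iUnion₂.2 ⟨x, hxs, subset_closure (subset_convexHull ℝ _ ⟨hy, hyx⟩)⟩
  obtain ⟨x, hxs, hpx⟩ := mem_iUnion₂.1 <| mem_of_mem_convexHull_of_mem_extremePoints hXconv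
    (iUnion₂_subset fun x _ => hCX x) hp (hKC hpK')
  obtain ⟨v, hv, rfl⟩ := hCV x hpx
  exact hVK hv (by simpa using hsK x hxs)

theorem halfspace_basis_at_extremePoint_general
    {E : Type*} [AddCommGroup E] [Module ℝ E] [TopologicalSpace E]
    [IsTopologicalAddGroup E] [ContinuousSMul ℝ E] [T2Space E]
    [LocallyConvexSpace ℝ E]
    (X : Set E) (hXcomp : IsCompact X) (hXconv : Convex ℝ X)
    (p : E) (hp : p ∈ Set.extremePoints ℝ X)
    (U : Set E) (hU : U ∈ nhdsWithin p X) :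
    ∃ φ : E → ℝ, ContinuousOn φ X ∧
      (∀ x ∈ X, ∀ y ∈ X, ∀ t ∈ Icc (0:ℝ) 1,
        φ (t • x + (1 - t) • y) = t * φ x + (1 - t) * φ y) ∧
      0 < φ p ∧ {x ∈ X | 0 < φ x} ⊆ U := by
  obtain ⟨V, hVopen, hpV, hVU⟩ := mem_nhdsWithin.1 hU
  have hp' : p ∉ closure (convexHull ℝ (X \ V)) :=
    notMem_closure_convexHull_of_mem_extremePoints hXcomp hXconv hp sdiff_subset
      (hXcomp.diff hVopen) fun h => h.2 hpV
  obtain ⟨f, u, hfu, hup⟩ :=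
    geometric_hahn_banach_closed_point (convex_convexHull ℝ _).closure isClosed_closure hp'
  refine ⟨fun x => f x - u, by fun_prop, fun x _ y _ t _ => ?_, sub_pos.2 hup, ?_⟩
  · simp only [map_add, map_smul, smul_eq_mul]
    ring
  · rintro x ⟨hxX, hx⟩
    by_contra hxU
    have hxV : x ∉ V := fun hxV => hxU (hVU ⟨hxV, hxX⟩)
    exact lt_asymm (sub_pos.1 hx) (hfu x (subset_closure (subset_convexHull ℝ _ ⟨hxX, hxV⟩)))

/-- Near an extreme point of a compact convex set, open half-spaces form a basis of
neighborhoods: every neighborhood of an extreme point `p` inside `X` contains a set of the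
form `{x ∈ X | φ x > 0}` for some continuous affine `φ` with `φ p > 0`. -/
theorem halfspace_basis_at_extremePoint
    {E : Type*} [AddCommGroup E] [Module ℝ E] [TopologicalSpace E]
    [IsTopologicalAddGroup E] [ContinuousSMul ℝ E] [T2Space E]
    [LocallyConvexSpace ℝ E] [SeparatingDual ℝ E]
    (X : Set E) (hXne : X.Nonempty) (hXcomp : IsCompact X) (hXconv : Convex ℝ X)
    (p : E) (hp : p ∈ Set.extremePoints ℝ X)
    (U : Set E) (hUX : U ⊆ X) (hU : U ∈ nhdsWithin p X) :
    ∃ φ : E → ℝ, ContinuousOn φ X ∧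
      (∀ x ∈ X, ∀ y ∈ X, ∀ t ∈ Icc (0:ℝ) 1,
        φ (t • x + (1 - t) • y) = t * φ x + (1 - t) * φ y) ∧
      0 < φ p ∧ {x ∈ X | 0 < φ x} ⊆ U :=
  halfspace_basis_at_extremePoint_general X hXcomp hXconv p hp U hU
end

section
/- Affine Stone–Weierstrass theorem: Let E be a real Hausdorff locally convex topological vector space whose continuous linear functionals separate points and let X ⊆ E be a nonempty compact convex set. Let L be a linear subspace of the space of continuous affine functions X → ℝ that contains the constant functions and separates the points of X (for all x ≠ y in X there is g ∈ L with g(x) ≠ g(y)). Then L is uniformly dense in the space of continuous affine functions on X: for every continuous affine f : X → ℝ and every ε > 0 there exists g ∈ L with |f(x) − g(x)| ≤ ε for all x ∈ X. -/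
open Set

lemma pi_dual_finset {ι : Type*} [DecidableEq ι] (ψ : ((ι → ℝ)) →L[ℝ] ℝ) :
    ∃ s : Finset ι, ∀ y : ι → ℝ, ψ y = ∑ i ∈ s, ψ (Pi.single i 1) * y i := by
  have h0 : ψ ⁻¹' Metric.ball 0 1 ∈ nhds (0 : ι → ℝ) := by
    have := ψ.continuous.continuousAt (x := 0)
    exact this.preimage_mem_nhds (by simpa using Metric.ball_mem_nhds (0:ℝ) one_pos)
  rw [nhds_pi, Filter.mem_pi] at h0
  obtain ⟨I, hIfin, V, hV, hVsub⟩ := h0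
  haveI := Classical.decPred (· ∈ I)
  refine ⟨hIfin.toFinset, fun y => ?_⟩
  set z : ι → ℝ := fun i => if i ∈ I then 0 else y i with hzdef
  have hz : ψ z = 0 := by
    by_contra h
    have hmem : ∀ t : ℝ, t • z ∈ I.pi V := by
      intro t i hi
      simp only [Pi.smul_apply, hzdef, if_pos hi, smul_zero]
      exact mem_of_mem_nhds (hV i)
    have hb : ∀ t : ℝ, |t * ψ z| < 1 := by
      intro t
      have := hVsub (hmem t)
      simp only [mem_preimage, Metric.mem_ball, Real.dist_eq, sub_zero, map_smul,
        smul_eq_mul] at this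
      exact this
    have h2 := hb (2 / ψ z)
    rw [div_mul_cancel₀ _ h] at h2
    norm_num at h2
  have hdecomp : y = (∑ i ∈ hIfin.toFinset, y i • (Pi.single i 1 : ι → ℝ)) + z := by
    funext j
    simp only [Pi.add_apply, Finset.sum_apply, Pi.smul_apply, Pi.single_apply, smul_eq_mul,
      mul_ite, mul_one, mul_zero, hzdef]
    rw [Finset.sum_ite_eq hIfin.toFinset j y]
    by_cases hj : j ∈ I <;> simp [hj]
  conv_lhs => rw [hdecomp, map_add, hz, add_zero, map_sum]
  refine Finset.sum_congr rfl fun i _ => ?_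
  rw [map_smul, smul_eq_mul, mul_comm]


/-- Affine Stone–Weierstrass theorem: a linear subspace of the continuous affine functions on a
nonempty compact convex set which contains the constants and separates points is uniformly
dense among continuous affine functions. -/
theorem affine_stone_weierstrass
    {E : Type*} [AddCommGroup E] [Module ℝ E] [TopologicalSpace E]
    [IsTopologicalAddGroup E] [ContinuousSMul ℝ E] [T2Space E]
    [LocallyConvexSpace ℝ E] [SeparatingDual ℝ E]
    (X : Set E) (hXne : X.Nonempty) (hXcomp : IsCompact X) (hXconv : Convex ℝ X)
    (L : Set (E → ℝ))
    (hLaff : ∀ g ∈ L, ContinuousOn g X ∧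
      ∀ x ∈ X, ∀ y ∈ X, ∀ t ∈ Icc (0:ℝ) 1,
        g (t • x + (1 - t) • y) = t * g x + (1 - t) * g y)
    (hLadd : ∀ g ∈ L, ∀ h ∈ L, g + h ∈ L)
    (hLsmul : ∀ (c : ℝ), ∀ g ∈ L, c • g ∈ L)
    (hLconst : ∀ c : ℝ, (fun _ : E => c) ∈ L)
    (hLsep : ∀ x ∈ X, ∀ y ∈ X, x ≠ y → ∃ g ∈ L, g x ≠ g y)
    (f : E → ℝ) (hfc : ContinuousOn f X)
    (hfaff : ∀ x ∈ X, ∀ y ∈ X, ∀ t ∈ Icc (0:ℝ) 1,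
      f (t • x + (1 - t) • y) = t * f x + (1 - t) * f y)
    (ε : ℝ) (hε : 0 < ε) :
    ∃ g ∈ L, ∀ x ∈ X, |f x - g x| ≤ ε := by
  classical
  set ι := {g : E → ℝ // g ∈ L} with hι
  set Φ : E → (ι → ℝ) := fun x i => i.1 x with hΦ
  -- combinations of elements of L are in L
  have hsumL : ∀ (s : Finset ι) (w : ι → ℝ), (fun x => ∑ i ∈ s, w i * i.1 x) ∈ L := by
    intro s w
    induction s using Finset.induction_on with
    | empty => simpa using hLconst 0
    | @insert j s' hj ih =>
      have h1 : (w j) • j.1 ∈ L := hLsmul (w j) j.1 j.2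
      have h2 := hLadd _ h1 _ ih
      have : ((w j) • j.1 + fun x => ∑ i ∈ s', w i * i.1 x)
          = fun x => ∑ i ∈ insert j s', w i * i.1 x := by
        funext x
        simp [Finset.sum_insert hj]
      rwa [this] at h2
  have hmemL : ∀ (s : Finset ι) (w : ι → ℝ) (a : ℝ),
      (fun x => a + ∑ i ∈ s, w i * i.1 x) ∈ L := by
    intro s w a
    have := hLadd _ (hLconst a) _ (hsumL s w)
    exact this
  -- the two compact convex sets
  set F : E → (ι → ℝ) × ℝ := fun x => (Φ x, f x) with hF
  set G : E → (ι → ℝ) × ℝ := fun x => (Φ x, f x + ε) with hG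
  have hΦaff : ∀ x ∈ X, ∀ y ∈ X, ∀ a b : ℝ, 0 ≤ a → 0 ≤ b → a + b = 1 →
      Φ (a • x + b • y) = a • Φ x + b • Φ y := by
    intro x hx y hy a b ha hb hab
    funext i
    have hb' : b = 1 - a := by linarith
    have := (hLaff i.1 i.2).2 x hx y hy a ⟨ha, by linarith⟩
    simp only [Pi.add_apply, Pi.smul_apply, smul_eq_mul, hΦ]
    rw [hb', this]
  have hfaff' : ∀ x ∈ X, ∀ y ∈ X, ∀ a b : ℝ, 0 ≤ a → 0 ≤ b → a + b = 1 →
      f (a • x + b • y) = a * f x + b * f y := by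
    intro x hx y hy a b ha hb hab
    have hb' : b = 1 - a := by linarith
    rw [hb']
    exact hfaff x hx y hy a ⟨ha, by linarith⟩
  have hconvF : Convex ℝ (F '' X) := by
    rintro p ⟨x, hx, rfl⟩ q ⟨y, hy, rfl⟩ a b ha hb hab
    refine ⟨a • x + b • y, hXconv hx hy ha hb hab, ?_⟩
    simp only [hF, Prod.smul_mk, Prod.mk_add_mk, smul_eq_mul, Prod.mk.injEq]
    exact ⟨hΦaff x hx y hy a b ha hb hab, hfaff' x hx y hy a b ha hb hab⟩
  have hconvG : Convex ℝ (G '' X) := by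
    rintro p ⟨x, hx, rfl⟩ q ⟨y, hy, rfl⟩ a b ha hb hab
    refine ⟨a • x + b • y, hXconv hx hy ha hb hab, ?_⟩
    simp only [hG, Prod.smul_mk, Prod.mk_add_mk, smul_eq_mul, Prod.mk.injEq]
    refine ⟨hΦaff x hx y hy a b ha hb hab, ?_⟩
    rw [hfaff' x hx y hy a b ha hb hab]; linear_combination (-ε) * hab
  have hΦc : ContinuousOn Φ X := continuousOn_pi.2 fun i => (hLaff i.1 i.2).1
  have hcompF : IsCompact (F '' X) :=
    hXcomp.image_of_continuousOn (hΦc.prodMk hfc)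
  have hcompG : IsCompact (G '' X) :=
    hXcomp.image_of_continuousOn (hΦc.prodMk (hfc.add continuousOn_const))
  have hΦinj : ∀ x ∈ X, ∀ y ∈ X, Φ x = Φ y → x = y := by
    intro x hx y hy hxy
    by_contra hne
    obtain ⟨g, hg, hgxy⟩ := hLsep x hx y hy hne
    exact hgxy (congrFun hxy ⟨g, hg⟩)
  have hdisj : Disjoint (F '' X) (G '' X) := by
    rw [Set.disjoint_left]
    rintro p ⟨x, hx, rfl⟩ ⟨y, hy, hpy⟩
    have h1 : Φ y = Φ x := congrArg Prod.fst hpy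
    have h2 : f y + ε = f x := congrArg Prod.snd hpy
    have := hΦinj y hy x hx h1
    rw [this] at h2
    linarith
  obtain ⟨φ, u, v, hu, huv, hv⟩ :=
    geometric_hahn_banach_compact_closed hconvF hcompF hconvG hcompG.isClosed hdisj
  set ψ : (ι → ℝ) →L[ℝ] ℝ := φ.comp (ContinuousLinearMap.inl ℝ (ι → ℝ) ℝ) with hψ
  set c : ℝ := φ (0, 1) with hc
  have hφ : ∀ (y : ι → ℝ) (r : ℝ), φ (y, r) = ψ y + r * c := by
    intro y r
    have : ((y, r) : (ι → ℝ) × ℝ) = (y, 0) + r • ((0 : ι → ℝ), (1:ℝ)) := by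
      simp [Prod.ext_iff]
    rw [this, map_add, map_smul, smul_eq_mul]
    simp [hψ, hc, ContinuousLinearMap.inl_apply]
  have hA : ∀ x ∈ X, ψ (Φ x) + f x * c < u := by
    intro x hx
    have := hu (F x) ⟨x, hx, rfl⟩
    rwa [hF, hφ] at this
  have hB : ∀ x ∈ X, v < ψ (Φ x) + (f x + ε) * c := by
    intro x hx
    have := hv (G x) ⟨x, hx, rfl⟩
    rwa [hG, hφ] at this
  obtain ⟨x₀, hx₀⟩ := hXne
  have hcpos : 0 < c := by nlinarith [hA x₀ hx₀, hB x₀ hx₀]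
  set m : ℝ := (u + v) / 2 with hm
  obtain ⟨s, hsψ⟩ := pi_dual_finset ψ
  refine ⟨fun x => (m / c - ε / 2) + ∑ i ∈ s, (-(ψ (Pi.single i 1)) / c) * i.1 x,
    hmemL s _ _, ?_⟩
  intro x hx
  have h1 := hA x hx
  have h2 := hB x hx
  have hg : (m / c - ε / 2) + ∑ i ∈ s, (-(ψ (Pi.single i 1)) / c) * i.1 x
      = (m - ψ (Φ x)) / c - ε / 2 := by
    have hterm : ∑ i ∈ s, (-(ψ (Pi.single i 1)) / c) * i.1 x
        = ∑ i ∈ s, (-(ψ (Pi.single i 1) * Φ x i)) / c := by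
      refine Finset.sum_congr rfl fun i _ => ?_
      simp only [hΦ]; ring
    rw [hterm, ← Finset.sum_div, Finset.sum_neg_distrib, ← hsψ (Φ x)]
    field_simp
    ring
  show |f x - ((m / c - ε / 2) + ∑ i ∈ s, (-(ψ (Pi.single i 1)) / c) * i.1 x)| ≤ ε
  rw [hg]
  have hq1 : f x < (m - ψ (Φ x)) / c := by
    rw [lt_div_iff₀ hcpos]; nlinarith
  have hq2 : (m - ψ (Φ x)) / c < f x + ε := by
    rw [div_lt_iff₀ hcpos]; nlinarith
  rw [abs_le]
  constructor <;> linarith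
end

section
/- Let E be a real Hausdorff locally convex topological vector space whose continuous linear functionals separate points, let X ⊆ E be a nonempty compact convex set, let Σ be a set of continuous affine functions X → ℝ, and set K = {x ∈ X : ψ(x) ≥ 0 for all ψ ∈ Σ}. Then for a continuous affine function φ : X → ℝ, the following are equivalent: (i) φ(x) ≥ 0 for all x ∈ K; (ii) φ belongs to the closure, with respect to the supremum norm on continuous functions on X, of the convex cone generated by Σ together with all nonnegative continuous affine functions on X (the smallest subset of continuous affine functions containing these, closed under addition and under multiplication by nonnegative real scalars). -/
open Set

/-- A function `f : E → ℝ` is continuous and affine on the convex set `X`. -/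
def IsContAffineOn {E : Type*} [AddCommGroup E] [Module ℝ E] [TopologicalSpace E]
    (X : Set E) (f : E → ℝ) : Prop :=
  ContinuousOn f X ∧ ∀ x ∈ X, ∀ y ∈ X, ∀ t ∈ Set.Icc (0:ℝ) 1,
    f (t • x + (1 - t) • y) = t * f x + (1 - t) * f y

/-- Key finite-dimensional separation step. -/
lemma exists_coeffs {E : Type*} [AddCommGroup E] [Module ℝ E] [TopologicalSpace E]
    (X : Set E) (hXne : X.Nonempty) (hXcomp : IsCompact X) (hXconv : Convex ℝ X)
    (φ : E → ℝ) (hφ : IsContAffineOn X φ) {ε : ℝ} (hε : 0 < ε) {n : ℕ}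
    (ψf : Fin n → E → ℝ) (hψ : ∀ i, IsContAffineOn X (ψf i))
    (key : ∀ x ∈ X, (∀ i, 0 ≤ ψf i x) → -ε < φ x) :
    ∃ (δ : ℝ) (c : Fin n → ℝ), 0 ≤ δ ∧ δ ≤ ε ∧ (∀ i, 0 ≤ c i) ∧
      ∀ x ∈ X, ∑ i, c i * ψf i x ≤ φ x + δ := by
  classical
  set T : E → (Fin (n + 1) → ℝ) := fun x => Fin.snoc (fun i => ψf i x) (φ x + ε) with hT
  have hTcont : ContinuousOn T X := by
    refine continuousOn_pi.2 fun j => ?_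
    refine Fin.lastCases ?_ ?_ j
    · simp only [hT, Fin.snoc_last]
      exact hφ.1.add continuousOn_const
    · intro i
      simp only [hT, Fin.snoc_castSucc]
      exact (hψ i).1
  set Y : Set (Fin (n + 1) → ℝ) := T '' X with hY
  have hYcomp : IsCompact Y := hXcomp.image_of_continuousOn hTcont
  have hTaff : ∀ x ∈ X, ∀ y ∈ X, ∀ a b : ℝ, 0 ≤ a → 0 ≤ b → a + b = 1 →
      T (a • x + b • y) = a • T x + b • T y := by
    intro x hx y hy a b ha hb hab
    have hb' : b = 1 - a := by linarith
    have ha1 : a ∈ Set.Icc (0:ℝ) 1 := ⟨ha, by linarith⟩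
    subst hb'
    funext j
    refine Fin.lastCases ?_ ?_ j
    · simp only [hT, Fin.snoc_last, Pi.add_apply, Pi.smul_apply, smul_eq_mul]
      rw [hφ.2 x hx y hy a ha1]; ring
    · intro i
      simp only [hT, Fin.snoc_castSucc, Pi.add_apply, Pi.smul_apply, smul_eq_mul]
      rw [(hψ i).2 x hx y hy a ha1]
  have hYconv : Convex ℝ Y := by
    rintro _ ⟨x, hx, rfl⟩ _ ⟨y, hy, rfl⟩ a b ha hb hab
    exact ⟨a • x + b • y, hXconv hx hy ha hb hab, hTaff x hx y hy a b ha hb hab⟩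
  set C : Set (Fin (n + 1) → ℝ) :=
    {v | (∀ i : Fin n, 0 ≤ v i.castSucc) ∧ v (Fin.last n) ≤ 0} with hC
  have hCconv : Convex ℝ C := by
    rintro v ⟨hv1, hv2⟩ w ⟨hw1, hw2⟩ a b ha hb _
    constructor
    · intro i
      simp only [Pi.add_apply, Pi.smul_apply, smul_eq_mul]
      have := hv1 i; have := hw1 i; positivity
    · simp only [Pi.add_apply, Pi.smul_apply, smul_eq_mul]
      exact add_nonpos (mul_nonpos_of_nonneg_of_nonpos ha hv2)
        (mul_nonpos_of_nonneg_of_nonpos hb hw2)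
  have hCcl : IsClosed C := by
    have : C = (⋂ i : Fin n, {v : Fin (n+1) → ℝ | 0 ≤ v i.castSucc}) ∩
        {v : Fin (n+1) → ℝ | v (Fin.last n) ≤ 0} := by
      ext v; simp [hC, Set.mem_iInter]
    rw [this]
    exact (isClosed_iInter fun i => isClosed_le continuous_const (continuous_apply _)).inter
      (isClosed_le (continuous_apply _) continuous_const)
  have hdisj : Disjoint Y C := by
    rw [Set.disjoint_left]
    rintro _ ⟨x, hx, rfl⟩ ⟨h1, h2⟩
    have hk : -ε < φ x := key x hx fun i => by
      simpa only [hT, Fin.snoc_castSucc] using h1 i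
    simp only [hT, Fin.snoc_last] at h2
    linarith
  obtain ⟨f, u, v, hfY, huv, hfC⟩ :=
    geometric_hahn_banach_compact_closed hYconv hYcomp hCconv hCcl hdisj
  have h0C : (0 : Fin (n+1) → ℝ) ∈ C := ⟨fun i => le_rfl, le_rfl⟩
  have hv0 : v < 0 := by simpa using hfC 0 h0C
  have hfC' : ∀ c ∈ C, 0 ≤ f c := by
    intro c hc
    by_contra hneg
    push_neg at hneg
    have hs : 0 < v / f c := div_pos_of_neg_of_neg hv0 hneg
    have hmem : (v / f c) • c ∈ C := by
      obtain ⟨hc1, hc2⟩ := hc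
      constructor
      · intro i
        simp only [Pi.smul_apply, smul_eq_mul]
        exact mul_nonneg hs.le (hc1 i)
      · simp only [Pi.smul_apply, smul_eq_mul]
        exact mul_nonpos_of_nonneg_of_nonpos hs.le hc2
    have := hfC _ hmem
    rw [map_smul, smul_eq_mul, div_mul_cancel₀ v (ne_of_lt hneg)] at this
    exact lt_irrefl v this
  set ev : Fin (n + 1) → (Fin (n + 1) → ℝ) :=
    fun k => fun j => if k = j then 1 else 0 with hev
  have hfw : ∀ w : Fin (n + 1) → ℝ, f w = ∑ j, w j * f (ev j) := by
    intro w
    conv_lhs => rw [pi_eq_sum_univ w]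
    rw [map_sum]
    exact Finset.sum_congr rfl fun j _ => by rw [map_smul, smul_eq_mul]
  set α : Fin n → ℝ := fun i => f (ev i.castSucc) with hα
  set β : ℝ := f (ev (Fin.last n)) with hβ
  have hαpos : ∀ i, 0 ≤ α i := by
    intro i
    refine hfC' _ ⟨fun j => ?_, ?_⟩
    · simp only [hev]
      split_ifs <;> norm_num
    · simp only [hev]
      rw [if_neg (Fin.castSucc_lt_last i).ne]
  have hβ0 : β ≤ 0 := by
    have h := hfC' (-(ev (Fin.last n))) ⟨fun j => ?_, ?_⟩
    · rw [map_neg] at h; linarith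
    · simp only [hev, Pi.neg_apply]
      rw [if_neg (Fin.castSucc_lt_last j).ne', neg_zero]
    · simp only [hev, Pi.neg_apply, if_pos rfl]
      norm_num
  have hmain : ∀ x ∈ X, ∑ i, ψf i x * α i + (φ x + ε) * β ≤ v := by
    intro x hx
    have h1 : f (T x) < u := hfY _ ⟨x, hx, rfl⟩
    have h2 : f (T x) = ∑ i, ψf i x * α i + (φ x + ε) * β := by
      rw [hfw (T x), Fin.sum_univ_castSucc]
      simp only [hT, Fin.snoc_castSucc, Fin.snoc_last]
      rfl
    linarith
  rcases lt_or_eq_of_le hβ0 with hblt | hbeq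
  · -- β < 0
    refine ⟨ε, fun i => α i / (-β), hε.le, le_rfl, fun i => div_nonneg (hαpos i) (by linarith),
      fun x hx => ?_⟩
    have h2 : ∑ i, ψf i x * α i ≤ (φ x + ε) * (-β) := by
      have := hmain x hx
      rw [mul_neg]
      linarith
    have hbpos : (0:ℝ) < -β := by linarith
    calc ∑ i, (α i / (-β)) * ψf i x = (∑ i, ψf i x * α i) / (-β) := by
          rw [Finset.sum_div]
          exact Finset.sum_congr rfl fun i _ => by ring
      _ ≤ φ x + ε := by
          rw [div_le_iff₀ hbpos]
          linarith
  · -- β = 0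
    obtain ⟨x₀, hx₀, hmin⟩ := hXcomp.exists_isMinOn hXne hφ.1
    set B : ℝ := max 0 (-(φ x₀)) with hB
    have hBpos : 0 ≤ B := le_max_left _ _
    set lam : ℝ := B / (-v) with hlam
    have hlampos : 0 ≤ lam := div_nonneg hBpos (by linarith)
    have hvne : v ≠ 0 := ne_of_lt hv0
    have hlamv : lam * v = -B := by
      rw [hlam, div_mul_eq_mul_div, div_neg, mul_div_cancel_right₀ _ hvne]
    refine ⟨0, fun i => lam * α i, le_rfl, hε.le,
      fun i => mul_nonneg hlampos (hαpos i), fun x hx => ?_⟩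
    have hm : ∑ i, ψf i x * α i ≤ v := by
      have := hmain x hx
      rw [hbeq, mul_zero, add_zero] at this
      exact this
    have h3 : ∑ i, (lam * α i) * ψf i x = lam * ∑ i, ψf i x * α i := by
      rw [Finset.mul_sum]
      exact Finset.sum_congr rfl fun i _ => by ring
    have h4 : lam * ∑ i, ψf i x * α i ≤ lam * v := mul_le_mul_of_nonneg_left hm hlampos
    have h5 : -B ≤ φ x := by
      have h6 : φ x₀ ≤ φ x := hmin hx
      have : -(φ x₀) ≤ B := le_max_right _ _
      linarith
    rw [h3]
    linarith

/-- A continuous affine function `φ` is nonnegative on `K = {x ∈ X | ∀ ψ ∈ S, ψ x ≥ 0}` if and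
only if `φ` lies in the sup-norm closure of the convex cone generated by `S` together with the
nonnegative continuous affine functions on `X` (i.e., it is uniformly approximable on `X` by
finite combinations, with nonnegative coefficients, of such functions). -/
theorem nonneg_on_iff_mem_closure_cone
    {E : Type*} [AddCommGroup E] [Module ℝ E] [TopologicalSpace E]
    [IsTopologicalAddGroup E] [ContinuousSMul ℝ E] [T2Space E]
    [LocallyConvexSpace ℝ E] [SeparatingDual ℝ E]
    (X : Set E) (hXne : X.Nonempty) (hXcomp : IsCompact X) (hXconv : Convex ℝ X)
    (S : Set (E → ℝ)) (hS : ∀ ψ ∈ S, IsContAffineOn X ψ)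
    (φ : E → ℝ) (hφ : IsContAffineOn X φ) :
    (∀ x ∈ X, (∀ ψ ∈ S, 0 ≤ ψ x) → 0 ≤ φ x) ↔
      ∀ ε > (0:ℝ), ∃ (n : ℕ) (c : Fin n → ℝ) (ψ : Fin n → E → ℝ),
        (∀ i, 0 ≤ c i) ∧
        (∀ i, ψ i ∈ S ∨ (IsContAffineOn X (ψ i) ∧ ∀ x ∈ X, 0 ≤ ψ i x)) ∧
        ∀ x ∈ X, |φ x - ∑ i, c i * ψ i x| ≤ ε := by
  classical
  constructor
  · intro hpos ε hε
    -- Step 1: reduce to a finite subfamily of S by compactness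
    set A : Set E := X ∩ φ ⁻¹' Set.Iic (-ε) with hA
    have hAcl : IsClosed A := hφ.1.preimage_isClosed_of_isClosed hXcomp.isClosed isClosed_Iic
    have hAcomp : IsCompact A := hXcomp.of_isClosed_subset hAcl Set.inter_subset_left
    set t : ↥S → Set E := fun ψ => X ∩ (ψ : E → ℝ) ⁻¹' Set.Ici 0 with ht
    have htcl : ∀ ψ : ↥S, IsClosed (t ψ) := fun ψ =>
      (hS ψ.1 ψ.2).1.preimage_isClosed_of_isClosed hXcomp.isClosed isClosed_Ici
    have hempty : A ∩ ⋂ ψ : ↥S, t ψ = ∅ := by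
      rw [Set.eq_empty_iff_forall_notMem]
      rintro x ⟨⟨hxX, hxA⟩, hxI⟩
      rw [Set.mem_iInter] at hxI
      have : 0 ≤ φ x := hpos x hxX fun ψ hψ => (hxI ⟨ψ, hψ⟩).2
      have hxA' : φ x ≤ -ε := hxA
      linarith
    obtain ⟨u, hu⟩ := hAcomp.elim_finite_subfamily_closed t htcl hempty
    set e := u.equivFin with he
    set ψf : Fin u.card → E → ℝ := fun i => ((e.symm i : ↥S) : E → ℝ) with hψf
    have hψfS : ∀ i, ψf i ∈ S := fun i => (e.symm i : ↥S).2
    have hψfca : ∀ i, IsContAffineOn X (ψf i) := fun i => hS _ (hψfS i)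
    have key : ∀ x ∈ X, (∀ i, 0 ≤ ψf i x) → -ε < φ x := by
      intro x hx h
      by_contra hle
      push_neg at hle
      have hxA : x ∈ A := ⟨hx, by simpa using hle⟩
      have hxI : x ∈ ⋂ ψ ∈ u, t ψ := by
        rw [Set.mem_iInter₂]
        intro ψ hψu
        refine ⟨hx, ?_⟩
        have hval : ψf (e ⟨ψ, hψu⟩) = (ψ : E → ℝ) := by
          simp [hψf, Equiv.symm_apply_apply]
        have := h (e ⟨ψ, hψu⟩)
        rw [hval] at this
        simpa using this
      exact Set.eq_empty_iff_forall_notMem.1 hu x ⟨hxA, hxI⟩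
    -- Step 2: finite-dimensional separation
    obtain ⟨δ, c, hδ0, hδε, hc, hbound⟩ :=
      exists_coeffs X hXne hXcomp hXconv φ hφ hε ψf hψfca key
    -- Step 3: assemble
    set g : E → ℝ := fun x => φ x + δ - ∑ i, c i * ψf i x with hg
    have hg0 : ∀ x ∈ X, 0 ≤ g x := fun x hx => by
      have := hbound x hx; simp only [hg]; linarith
    have hgca : IsContAffineOn X g := by
      constructor
      · exact (hφ.1.add continuousOn_const).sub
          (continuousOn_finset_sum _ fun i _ => continuousOn_const.mul (hψfca i).1)
      · intro x hx y hy s hs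
        have hsum : ∑ i, c i * ψf i (s • x + (1 - s) • y)
            = s * ∑ i, c i * ψf i x + (1 - s) * ∑ i, c i * ψf i y := by
          rw [Finset.mul_sum, Finset.mul_sum, ← Finset.sum_add_distrib]
          exact Finset.sum_congr rfl fun i _ => by
            rw [(hψfca i).2 x hx y hy s hs]; ring
        simp only [hg]
        rw [hφ.2 x hx y hy s hs, hsum]
        ring
    set cc : Fin (u.card + 1) → ℝ := Fin.snoc c 1 with hcc
    set ψψ : Fin (u.card + 1) → E → ℝ := Fin.snoc ψf g with hψψ
    refine ⟨u.card + 1, cc, ψψ, ?_, ?_, ?_⟩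
    · intro i
      refine Fin.lastCases ?_ ?_ i
      · simp [hcc]
      · intro j; simpa [hcc] using hc j
    · intro i
      refine Fin.lastCases ?_ ?_ i
      · right
        simpa [hψψ] using ⟨hgca, hg0⟩
      · intro j
        left
        simpa [hψψ] using hψfS j
    · intro x hx
      have hsum : ∑ i : Fin (u.card + 1), cc i * ψψ i x
          = ∑ i : Fin u.card, c i * ψf i x + g x := by
        rw [Fin.sum_univ_castSucc]
        simp [hcc, hψψ]
      rw [hsum]
      simp only [hg]
      have : φ x - (∑ i : Fin u.card, c i * ψf i x + (φ x + δ - ∑ i, c i * ψf i x)) = -δ := by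
        ring
      rw [this, abs_neg, abs_of_nonneg hδ0]
      exact hδε
  · intro happrox x hx hK
    by_contra hneg
    push_neg at hneg
    obtain ⟨n, c, ψ, hc, hmem, happ⟩ := happrox (-(φ x) / 2) (by linarith)
    have hsum0 : 0 ≤ ∑ i, c i * ψ i x := by
      refine Finset.sum_nonneg fun i _ => mul_nonneg (hc i) ?_
      rcases hmem i with h | h
      · exact hK _ h
      · exact h.2 x hx
    have := happ x hx
    rw [abs_le] at this
    linarith [this.1]
end

section
/- Let E be a real Hausdorff locally convex topological vector space whose continuous linear functionals separate points, let X ⊆ E be a nonempty compact convex set, and let Σ be a set of continuous affine functions X → ℝ that is closed under addition (φ, ψ ∈ Σ implies φ + ψ ∈ Σ). Then the following are equivalent: (i) there exists x ∈ X with φ(x) ≥ 0 for all φ ∈ Σ; (ii) for every φ ∈ Σ there exists x ∈ X with φ(x) ≥ 0; (iii) for every φ ∈ Σ there exists x ∈ X with φ(x) + 1 ≥ 0. -/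
open Set

set_option linter.unusedSectionVars false

section Aux
variable {E : Type*} [AddCommGroup E] [Module ℝ E] [TopologicalSpace E]
    [IsTopologicalAddGroup E] [ContinuousSMul ℝ E]
    {X : Set E} {S : Set (E → ℝ)}

lemma aux_nsmul (hSadd : ∀ φ ∈ S, ∀ ψ ∈ S, φ + ψ ∈ S)
    {φ : E → ℝ} (hφ : φ ∈ S) : ∀ n : ℕ, 0 < n → (fun x => (n : ℝ) * φ x) ∈ S := by
  intro n hn
  induction n with
  | zero => omega
  | succ m ih =>
    rcases Nat.eq_zero_or_pos m with rfl | hm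
    · simpa using hφ
    · have := hSadd _ (ih hm) _ hφ
      have he : ((fun x => (m : ℝ) * φ x) + φ) = (fun x => ((m + 1 : ℕ) : ℝ) * φ x) := by
        funext x; simp [Pi.add_apply]; ring
      rwa [he] at this

lemma aux_sum (hSadd : ∀ φ ∈ S, ∀ ψ ∈ S, φ + ψ ∈ S)
    {ι : Type*} (t : Finset ι) (ht : t.Nonempty) (ψ : ι → E → ℝ)
    (h : ∀ i ∈ t, ψ i ∈ S) : (∑ i ∈ t, ψ i) ∈ S := by
  induction ht using Finset.Nonempty.cons_induction with
  | singleton i => simpa using h i (by simp)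
  | cons i s his hs ih =>
    rw [Finset.sum_cons]
    exact hSadd _ (h i (by simp)) _ (ih (fun j hj => h j (by simp [hj])))

lemma finite_case
    (hXne : X.Nonempty) (hXcomp : IsCompact X) (hXconv : Convex ℝ X)
    (hS : ∀ φ ∈ S, IsContAffineOn X φ)
    (hSadd : ∀ φ ∈ S, ∀ ψ ∈ S, φ + ψ ∈ S)
    (hiii : ∀ φ ∈ S, ∃ x ∈ X, 0 ≤ φ x + 1)
    {ι : Type*} [Fintype ι] (φ : ι → E → ℝ) (hφ : ∀ i, φ i ∈ S) :
    ∃ x ∈ X, ∀ i, 0 ≤ φ i x := by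
  classical
  cases isEmpty_or_nonempty ι with
  | inl h => exact ⟨hXne.choose, hXne.choose_spec, fun i => h.elim i⟩
  | inr hne =>
  let Φ : E → (ι → ℝ) := fun x i => φ i x
  let K : Set (ι → ℝ) := Φ '' X
  have hKcomp : IsCompact K :=
    hXcomp.image_of_continuousOn (continuousOn_pi.2 fun i => (hS _ (hφ i)).1)
  have hKconv : Convex ℝ K := by
    rintro _ ⟨x, hx, rfl⟩ _ ⟨y, hy, rfl⟩ a b ha hb hab
    refine ⟨a • x + b • y, hXconv hx hy ha hb hab, ?_⟩
    funext i
    have hb' : b = 1 - a := by linarith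
    subst hb'
    have := (hS _ (hφ i)).2 x hx y hy a ⟨ha, by linarith⟩
    simpa [Φ] using this
  let P : Set (ι → ℝ) := {y | ∀ i, 0 ≤ y i}
  have hPclosed : IsClosed P := by
    have : P = ⋂ i, (fun y : ι → ℝ => y i) ⁻¹' Ici 0 := by ext y; simp [P]
    rw [this]; exact isClosed_iInter fun i => isClosed_Ici.preimage (continuous_apply i)
  have hPconv : Convex ℝ P := fun y hy z hz a b ha hb hab i =>
    add_nonneg (mul_nonneg ha (hy i)) (mul_nonneg hb (hz i))
  by_cases hKP : (K ∩ P).Nonempty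
  · obtain ⟨_, ⟨x, hx, rfl⟩, hp⟩ := hKP
    exact ⟨x, hx, fun i => hp i⟩
  exfalso
  have hdisj : Disjoint K P :=
    Set.disjoint_iff_inter_eq_empty.2 (Set.not_nonempty_iff_eq_empty.1 hKP)
  obtain ⟨f, u, v, hfu, huv, hfv⟩ :=
    geometric_hahn_banach_compact_closed hKconv hKcomp hPconv hPclosed hdisj
  have hv0 : v < 0 := by
    have h0P : (0 : ι → ℝ) ∈ P := fun i => le_refl 0
    have := hfv 0 h0P
    simpa using this
  have hu0 : u < 0 := huv.trans hv0
  set c : ι → ℝ := fun i => f (Pi.single i 1) with hc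
  have hcnn : ∀ i, 0 ≤ c i := by
    intro i
    by_contra hci
    push_neg at hci
    set y : ι → ℝ := ((v - 1) / c i) • Pi.single i (1:ℝ) with hy
    have hyP : y ∈ P := by
      intro j
      have hd : 0 ≤ (v - 1) / c i := by
        rw [div_nonneg_iff]; right; constructor <;> linarith
      by_cases hj : j = i
      · subst hj; simp [hy, Pi.single_apply, hd]
      · simp [hy, Pi.single_apply, hj]
    have := hfv y hyP
    rw [hy, map_smul] at this
    simp only [smul_eq_mul, ← hc] at this
    rw [div_mul_cancel₀ _ (ne_of_lt hci)] at this
    linarith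
  have hf_sum : ∀ y : ι → ℝ, f y = ∑ i, y i * c i := by
    intro y
    have hrep : y = ∑ i, y i • Pi.single i (1:ℝ) := by
      funext j
      simp [Finset.sum_apply, Pi.single_apply, Finset.sum_ite_eq]
    conv_lhs => rw [hrep]
    rw [map_sum]
    refine Finset.sum_congr rfl fun i _ => ?_
    rw [map_smul]; simp [hc]
  -- bound
  have hbound : ∀ i : ι, ∃ C : ℝ, ∀ x ∈ X, |φ i x| ≤ C := by
    intro i
    obtain ⟨C, hC⟩ := hXcomp.exists_bound_of_continuousOn (hS _ (hφ i)).1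
    exact ⟨C, fun x hx => by simpa using hC x hx⟩
  choose C hC using hbound
  set M : ℝ := 1 + ∑ i, |C i| with hM
  have hM1 : (1:ℝ) ≤ M := by
    have : (0:ℝ) ≤ ∑ i, |C i| := Finset.sum_nonneg fun i _ => abs_nonneg _
    linarith
  have hMb : ∀ i, ∀ x ∈ X, |φ i x| ≤ M := by
    intro i x hx
    have h1 : C i ≤ |C i| := le_abs_self _
    have h2 : |C i| ≤ ∑ j, |C j| :=
      Finset.single_le_sum (fun j _ => abs_nonneg (C j)) (Finset.mem_univ i)
    have := hC i x hx
    linarith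
  set n : ℕ := Fintype.card ι with hn
  set N : ℕ := ⌈(2 * n * M + 2) / (-u)⌉₊ with hN
  have hNu : (N : ℝ) * (-u) ≥ 2 * n * M + 2 := by
    have h1 : (2 * n * M + 2) / (-u) ≤ (N : ℝ) := Nat.le_ceil _
    have h2 : (0:ℝ) < -u := by linarith
    have := (div_le_iff₀ h2).1 h1
    linarith
  set a : ι → ℕ := fun i => ⌈(N : ℝ) * c i⌉₊ + 1 with ha
  have ha_lb : ∀ i, (N : ℝ) * c i ≤ (a i : ℝ) := by
    intro i
    have := Nat.le_ceil ((N : ℝ) * c i)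
    push_cast [ha]
    linarith
  have ha_ub : ∀ i, (a i : ℝ) ≤ (N : ℝ) * c i + 2 := by
    intro i
    have h1 : (⌈(N : ℝ) * c i⌉₊ : ℝ) < (N : ℝ) * c i + 1 :=
      Nat.ceil_lt_add_one (mul_nonneg (Nat.cast_nonneg _) (hcnn i))
    push_cast [ha]
    linarith
  set ψ : E → ℝ := ∑ i, (fun x => ((a i : ℕ) : ℝ) * φ i x) with hψ
  have hψS : ψ ∈ S := by
    refine aux_sum hSadd Finset.univ Finset.univ_nonempty _ fun i _ => ?_
    exact aux_nsmul hSadd (hφ i) (a i) (Nat.succ_pos _)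
  have hψle : ∀ x ∈ X, ψ x ≤ -2 := by
    intro x hx
    have hfx : ∑ i, φ i x * c i < u := by
      rw [← hf_sum (Φ x)]
      exact hfu (Φ x) ⟨x, hx, rfl⟩
    have hterm : ∀ i, ((a i : ℕ) : ℝ) * φ i x ≤ (N : ℝ) * c i * φ i x + 2 * M := by
      intro i
      have h1 : |((a i : ℕ) : ℝ) - (N : ℝ) * c i| ≤ 2 := by
        rw [abs_le]; constructor <;> [linarith [ha_lb i]; linarith [ha_ub i]]
      have h2 : |φ i x| ≤ M := hMb i x hx
      have h3 : (((a i : ℕ) : ℝ) - (N : ℝ) * c i) * φ i x ≤ 2 * M := by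
        calc (((a i : ℕ) : ℝ) - (N : ℝ) * c i) * φ i x
            ≤ |(((a i : ℕ) : ℝ) - (N : ℝ) * c i) * φ i x| := le_abs_self _
          _ = |((a i : ℕ) : ℝ) - (N : ℝ) * c i| * |φ i x| := abs_mul _ _
          _ ≤ 2 * M := mul_le_mul h1 h2 (abs_nonneg _) (by norm_num)
      nlinarith
    have hsum : ψ x ≤ (N : ℝ) * (∑ i, φ i x * c i) + 2 * n * M := by
      have : ψ x = ∑ i, ((a i : ℕ) : ℝ) * φ i x := by
        simp [hψ, Finset.sum_apply]
      rw [this]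
      have : ∑ i, ((a i : ℕ) : ℝ) * φ i x ≤ ∑ i, ((N : ℝ) * c i * φ i x + 2 * M) :=
        Finset.sum_le_sum fun i _ => hterm i
      calc ∑ i, ((a i : ℕ) : ℝ) * φ i x
          ≤ ∑ i, ((N : ℝ) * c i * φ i x + 2 * M) := this
        _ = ∑ i, (N : ℝ) * (φ i x * c i) + n * (2 * M) := by
            rw [Finset.sum_add_distrib, Finset.sum_const, Finset.card_univ]
            push_cast
            congr 1
            · exact Finset.sum_congr rfl fun i _ => by ring
            · simp [hn]
        _ = (N : ℝ) * (∑ i, φ i x * c i) + 2 * n * M := by rw [Finset.mul_sum]; ring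
    have hNs : (N : ℝ) * (∑ i, φ i x * c i) ≤ (N : ℝ) * u :=
      mul_le_mul_of_nonneg_left hfx.le (Nat.cast_nonneg _)
    have : (N : ℝ) * u + 2 * n * M ≤ -2 := by linarith [hNu]
    linarith
  obtain ⟨x, hx, hxψ⟩ := hiii ψ hψS
  have := hψle x hx
  linarith

end Aux

/-- Compactness theorem for families of continuous affine functions closed under addition on a
compact convex set: simultaneous nonnegativity somewhere is equivalent to individual
nonnegativity somewhere, and to individual boundedness below by `-1` somewhere. -/
theorem affine_compactness_tfae
    {E : Type*} [AddCommGroup E] [Module ℝ E] [TopologicalSpace E]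
    [IsTopologicalAddGroup E] [ContinuousSMul ℝ E] [T2Space E]
    [LocallyConvexSpace ℝ E] [SeparatingDual ℝ E]
    (X : Set E) (hXne : X.Nonempty) (hXcomp : IsCompact X) (hXconv : Convex ℝ X)
    (S : Set (E → ℝ)) (hS : ∀ φ ∈ S, IsContAffineOn X φ)
    (hSadd : ∀ φ ∈ S, ∀ ψ ∈ S, φ + ψ ∈ S) :
    ((∃ x ∈ X, ∀ φ ∈ S, 0 ≤ φ x) ↔ ∀ φ ∈ S, ∃ x ∈ X, 0 ≤ φ x) ∧
    ((∃ x ∈ X, ∀ φ ∈ S, 0 ≤ φ x) ↔ ∀ φ ∈ S, ∃ x ∈ X, 0 ≤ φ x + 1) := by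
  classical
  have key : (∀ φ ∈ S, ∃ x ∈ X, 0 ≤ φ x + 1) → ∃ x ∈ X, ∀ φ ∈ S, 0 ≤ φ x := by
    intro hiii
    let Z : ↥S → Set E := fun φ => {x ∈ X | 0 ≤ φ.1 x}
    have hZcl : ∀ φ : ↥S, IsClosed (Z φ) := by
      intro φ
      have h := (hS _ φ.2).1.preimage_isClosed_of_isClosed hXcomp.isClosed (isClosed_Ici (a := (0:ℝ)))
      convert h using 1
      rfl
    have hfin : ∀ t : Finset ↥S, (X ∩ ⋂ φ ∈ t, Z φ).Nonempty := by
      intro t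
      obtain ⟨x, hx, hall⟩ := finite_case hXne hXcomp hXconv hS hSadd hiii
        (fun i : ↥t => (i.1 : E → ℝ)) (fun i => i.1.2)
      exact ⟨x, hx, Set.mem_iInter₂.2 fun φ hφt => ⟨hx, hall ⟨φ, hφt⟩⟩⟩
    obtain ⟨x, hxX, hxZ⟩ := hXcomp.inter_iInter_nonempty Z hZcl hfin
    exact ⟨x, hxX, fun φ hφ => (Set.mem_iInter.1 hxZ ⟨φ, hφ⟩).2⟩
  constructor
  · constructor
    · rintro ⟨x, hx, h⟩ φ hφ
      exact ⟨x, hx, h φ hφ⟩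
    · intro h
      refine key fun φ hφ => ?_
      obtain ⟨x, hx, h0⟩ := h φ hφ
      exact ⟨x, hx, by linarith⟩
  · constructor
    · rintro ⟨x, hx, h⟩ φ hφ
      exact ⟨x, hx, by linarith [h φ hφ]⟩
    · exact key
end

section
/- Let E be a real Hausdorff locally convex topological vector space whose continuous linear functionals separate points, let X ⊆ E be a nonempty compact convex set, and let F ⊆ X be a closed face of X. Let μ be a regular (Radon) Borel probability measure on X whose barycenter lies in F, i.e., there is b ∈ F with f(b) = ∫ f dμ for every continuous affine f : X → ℝ. Then μ(F) = 1. -/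
open Set MeasureTheory

lemma integrable_of_compact' {E : Type*} {G : Type*} [NormedAddCommGroup G]
    [TopologicalSpace E] [MeasurableSpace E] [OpensMeasurableSpace E] [T2Space E]
    {C : Set E} (hCcomp : IsCompact C) {ν : Measure E} [IsFiniteMeasure ν]
    (hres : ν.restrict C = ν) (f : E → G) (hf : Continuous f) : Integrable f ν := by
  rw [← hres]
  exact hf.continuousOn.integrableOn_compact hCcomp

lemma exists_barycenter' {E : Type*} [AddCommGroup E] [Module ℝ E] [TopologicalSpace E]
    [IsTopologicalAddGroup E] [ContinuousSMul ℝ E] [T2Space E]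
    [MeasurableSpace E] [BorelSpace E]
    (C : Set E) (hCcomp : IsCompact C) (hCconv : Convex ℝ C) (_hCne : C.Nonempty)
    (ν : Measure E) [IsProbabilityMeasure ν] (hν : ν Cᶜ = 0) :
    ∃ p ∈ C, ∀ ℓ : E →L[ℝ] ℝ, ℓ p = ∫ x, ℓ x ∂ν := by
  have hres : ν.restrict C = ν := by
    apply Measure.restrict_eq_self_of_ae_mem
    rw [MeasureTheory.ae_iff]
    exact hν
  have haemem : ∀ᵐ x ∂ν, x ∈ C := by
    rw [MeasureTheory.ae_iff]; exact hν
  -- integrability of continuous functions into a normed space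
  have key : ∀ u : Finset (E →L[ℝ] ℝ), ∃ x ∈ C, ∀ ℓ ∈ u, ℓ x = ∫ y, ℓ y ∂ν := by
    intro u
    set T : E →L[ℝ] (u → ℝ) := ContinuousLinearMap.pi (fun ℓ => (ℓ : E →L[ℝ] ℝ)) with hT
    have hTint : Integrable (fun x => T x) ν := integrable_of_compact' hCcomp hres (fun x => T x) T.continuous
    set z : u → ℝ := ∫ x, T x ∂ν with hz
    have hzcoord : ∀ ℓ : u, z ℓ = ∫ x, (ℓ : E →L[ℝ] ℝ) x ∂ν := by
      intro ℓ
      have := (ContinuousLinearMap.proj (R := ℝ) (φ := fun _ : u => ℝ) ℓ).integral_comp_comm hTint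
      simpa [hz, hT] using this.symm
    have hzmem : z ∈ T '' C := by
      by_contra hzn
      have himg : IsClosed (T '' C) := (hCcomp.image T.continuous).isClosed
      have hconv : Convex ℝ (T '' C) := hCconv.linear_image T.toLinearMap
      obtain ⟨f, s, hfs, hsz⟩ := geometric_hahn_banach_closed_point hconv himg hzn
      have hfz : f z = ∫ x, f (T x) ∂ν := (f.integral_comp_comm hTint).symm
      have hle : ∫ x, f (T x) ∂ν ≤ s := by
        have : ∫ x, f (T x) ∂ν ≤ ∫ _x, s ∂ν := by
          apply integral_mono_ae ((integrable_of_compact' hCcomp hres (fun x => f (T x)) (f.continuous.comp T.continuous))) (integrable_const s)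
          filter_upwards [haemem] with x hx
          exact (hfs _ ⟨x, hx, rfl⟩).le
        simpa using this
      rw [hfz] at hsz
      exact absurd (hsz.trans_le hle) (lt_irrefl s)
    obtain ⟨x, hxC, hxz⟩ := hzmem
    refine ⟨x, hxC, fun ℓ hℓ => ?_⟩
    have := congrFun hxz ⟨ℓ, hℓ⟩
    simpa [hT, hzcoord ⟨ℓ, hℓ⟩] using this
  have := hCcomp.inter_iInter_nonempty
      (fun ℓ : E →L[ℝ] ℝ => {x | ℓ x = ∫ y, ℓ y ∂ν})
      (fun ℓ => isClosed_eq ℓ.continuous continuous_const)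
      (fun u => by
        obtain ⟨x, hxC, hx⟩ := key u
        exact ⟨x, hxC, by simpa using hx⟩)
  obtain ⟨p, hpC, hp⟩ := this
  exact ⟨p, hpC, by simpa [Set.mem_iInter] using hp⟩

/-- If the barycenter of a regular Borel probability measure on a compact convex set `X` lies
in a closed face `F` of `X`, then the measure gives full mass to `F`. -/
theorem measure_closedFace_eq_one_of_barycenter_mem
    {E : Type*} [AddCommGroup E] [Module ℝ E] [TopologicalSpace E]
    [IsTopologicalAddGroup E] [ContinuousSMul ℝ E] [T2Space E]
    [LocallyConvexSpace ℝ E] [SeparatingDual ℝ E]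
    [MeasurableSpace E] [BorelSpace E]
    (X : Set E) (hXne : X.Nonempty) (hXcomp : IsCompact X) (hXconv : Convex ℝ X)
    (F : Set E) (hFne : F.Nonempty) (hFcl : IsClosed F) (hFface : IsExtreme ℝ X F)
    (μ : Measure E) [IsProbabilityMeasure μ] [μ.Regular] (hμX : μ X = 1)
    (b : E) (hbF : b ∈ F)
    (hbary : ∀ f : E → ℝ, IsContAffineOn X f → f b = ∫ x in X, f x ∂μ) :
    μ F = 1 := by
  by_contra hFone
  have hFX : F ⊆ X := hFface.1
  have hXm : MeasurableSet X := hXcomp.isClosed.measurableSet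
  have hFm : MeasurableSet F := hFcl.measurableSet
  have hμXc : μ Xᶜ = 0 := by
    rw [measure_compl hXm (measure_ne_top μ X), hμX, measure_univ, tsub_self]
  have hresX : μ.restrict X = μ := by
    apply Measure.restrict_eq_self_of_ae_mem
    rw [MeasureTheory.ae_iff]; exact hμXc
  have hFlt : μ F < 1 := lt_of_le_of_ne prob_le_one hFone
  set D := X \ F with hD
  have hDm : MeasurableSet D := hXm.diff hFm
  have hDpos : 0 < μ D := by
    have h1 : μ D = μ X - μ F := measure_diff hFX (hFm.nullMeasurableSet) (measure_ne_top μ F)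
    rw [h1, hμX]
    exact tsub_pos_of_lt hFlt
  obtain ⟨K, hKD, hKcomp, hKlt⟩ := hDm.exists_isCompact_lt_add (measure_ne_top μ D) hDpos.ne'
  have hKpos : 0 < μ K := by
    by_contra h
    push_neg at h
    have : μ K = 0 := le_antisymm h bot_le
    rw [this, zero_add] at hKlt
    exact lt_irrefl _ hKlt
  -- for each x ∈ K, find an open nbhd V inside a closed convex set disjoint from F
  have cover : ∀ x ∈ K, ∃ V : Set E, IsOpen V ∧ x ∈ V ∧ ∃ C : Set E, Convex ℝ C ∧
      IsClosed C ∧ V ⊆ C ∧ C ∩ F = ∅ := by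
    intro x hx
    have hxF : x ∉ F := (hKD hx).2
    have hFc : Fᶜ ∈ nhds x := hFcl.isOpen_compl.mem_nhds hxF
    obtain ⟨t, htx, htcl, hts⟩ := exists_mem_nhds_isClosed_subset hFc
    obtain ⟨s, ⟨hsnhds, hsconv⟩, hst⟩ :=
      ((LocallyConvexSpace.convex_basis (𝕜 := ℝ) x).mem_iff).1 htx
    refine ⟨interior s, isOpen_interior, mem_interior_iff_mem_nhds.2 hsnhds, closure s,
      hsconv.closure, isClosed_closure, interior_subset.trans subset_closure, ?_⟩
    have hcl : closure s ⊆ Fᶜ := (closure_minimal hst htcl).trans hts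
    rw [Set.eq_empty_iff_forall_notMem]
    exact fun y ⟨hy1, hy2⟩ => hcl hy1 hy2
  choose! V hVopen hVmem Cc hCconv hCcl hVC hCF using cover
  obtain ⟨tf, htf⟩ := hKcomp.elim_nhds_subcover' (fun x hx => V x)
    (fun x hx => (hVopen x hx).mem_nhds (hVmem x hx))
  -- some piece has positive measure
  have hsum : μ K ≤ ∑ x ∈ tf, μ (K ∩ V x) := by
    calc μ K ≤ μ (⋃ x ∈ tf, K ∩ V ↑x) := by
          apply measure_mono
          intro y hy
          obtain ⟨x, hxmem, hxy⟩ := Set.mem_iUnion₂.1 (htf hy)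
          exact Set.mem_iUnion₂.2 ⟨x, hxmem, hy, hxy⟩
      _ ≤ ∑ x ∈ tf, μ (K ∩ V ↑x) := measure_biUnion_finset_le tf _
  obtain ⟨x₀, hx₀tf, hx₀⟩ : ∃ x₀ ∈ tf, μ (K ∩ V ↑x₀) ≠ 0 := by
    by_contra h
    push_neg at h
    have : ∑ x ∈ tf, μ (K ∩ V ↑x) = 0 := Finset.sum_eq_zero h
    rw [this] at hsum
    exact hKpos.ne' (le_antisymm hsum bot_le)
  have hx₀K : (x₀ : E) ∈ K := x₀.2
  set K₀ : Set E := K ∩ Cc x₀ with hK₀def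
  have hK₀comp : IsCompact K₀ := hKcomp.inter_right (hCcl _ hx₀K)
  have hK₀m : MeasurableSet K₀ := hK₀comp.isClosed.measurableSet
  have hK₀pos : 0 < μ K₀ :=
    lt_of_lt_of_le (pos_iff_ne_zero.2 hx₀) (measure_mono (Set.inter_subset_inter_right K (hVC _ hx₀K)))
  have hK₀X : K₀ ⊆ X := fun y hy => (hKD hy.1).1
  set C : Set E := Cc x₀ ∩ X with hCdef
  have hCcomp : IsCompact C := hXcomp.inter_left (hCcl _ hx₀K)
  have hCconv' : Convex ℝ C := (hCconv _ hx₀K).inter hXconv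
  have hK₀C : K₀ ⊆ C := fun y hy => ⟨hy.2, hK₀X hy⟩
  have hK₀ne : K₀.Nonempty := nonempty_of_measure_ne_zero hK₀pos.ne'
  have hCne : C.Nonempty := hK₀ne.mono hK₀C
  have hCFdisj : ∀ y, y ∈ C → y ∉ F := by
    intro y hyC hyF
    have := hCF _ hx₀K
    rw [Set.eq_empty_iff_forall_notMem] at this
    exact this y ⟨hyC.1, hyF⟩
  -- the first conditional measure
  set ν₁ : Measure E := (μ K₀)⁻¹ • μ.restrict K₀ with hν₁def
  have hK₀ne_top : μ K₀ ≠ ⊤ := measure_ne_top μ K₀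
  have hν₁prob : IsProbabilityMeasure ν₁ := by
    constructor
    rw [hν₁def, Measure.smul_apply, Measure.restrict_apply MeasurableSet.univ,
      Set.univ_inter, smul_eq_mul, ENNReal.inv_mul_cancel hK₀pos.ne' hK₀ne_top]
  have hν₁C : ν₁ Cᶜ = 0 := by
    rw [hν₁def, Measure.smul_apply, Measure.restrict_apply (hCcomp.isClosed.measurableSet.compl)]
    have : Cᶜ ∩ K₀ = ∅ := by
      rw [Set.eq_empty_iff_forall_notMem]
      rintro y ⟨hy1, hy2⟩
      exact hy1 (hK₀C hy2)
    rw [this, measure_empty, smul_eq_mul, mul_zero]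
  obtain ⟨x₁, hx₁C, hx₁⟩ := exists_barycenter' C hCcomp hCconv' hCne ν₁ hν₁C
  -- basic facts about linear functionals and μ
  have haff : ∀ ℓ : E →L[ℝ] ℝ, IsContAffineOn X ℓ := by
    intro ℓ
    refine ⟨ℓ.continuous.continuousOn, fun x _ y _ t _ => ?_⟩
    simp [map_add, _root_.map_smul, smul_eq_mul]
  have hbℓ : ∀ ℓ : E →L[ℝ] ℝ, ℓ b = ∫ x, ℓ x ∂μ := by
    intro ℓ
    have := hbary ℓ (haff ℓ)
    rwa [hresX] at this
  have hμint : ∀ ℓ : E →L[ℝ] ℝ, Integrable (fun x => ℓ x) μ :=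
    fun ℓ => integrable_of_compact' hXcomp hresX _ ℓ.continuous
  set lr : ℝ := (μ K₀).toReal with hlr
  have hlrpos : 0 < lr := ENNReal.toReal_pos hK₀pos.ne' hK₀ne_top
  have hint₁ : ∀ ℓ : E →L[ℝ] ℝ, ∫ x in K₀, ℓ x ∂μ = lr * ℓ x₁ := by
    intro ℓ
    have h1 : ℓ x₁ = ∫ x, ℓ x ∂ν₁ := hx₁ ℓ
    rw [hν₁def, integral_smul_measure] at h1
    rw [h1, ENNReal.toReal_inv, smul_eq_mul]
    field_simp
    rw [← hlr, mul_div_assoc, div_self hlrpos.ne', mul_one]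
  by_cases hcompl : μ K₀ᶜ = 0
  · -- all the mass is on K₀; then b = x₁ ∈ C, contradiction
    have hb : ∀ ℓ : E →L[ℝ] ℝ, ℓ b = ℓ x₁ := by
      intro ℓ
      have hsplit := integral_add_compl hK₀m (hμint ℓ)
      have hzero : ∫ x in K₀ᶜ, ℓ x ∂μ = 0 := by
        rw [Measure.restrict_eq_zero.2 hcompl, integral_zero_measure]
      have hlr1 : lr = 1 := by
        have : μ K₀ = 1 := by
          have := measure_add_measure_compl hK₀m (μ := μ)
          rw [hcompl, add_zero, measure_univ] at this
          exact this
        rw [hlr, this, ENNReal.toReal_one]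
      rw [hbℓ ℓ, ← hsplit, hzero, add_zero, hint₁ ℓ, hlr1, one_mul]
    have hbx₁ : b = x₁ := by
      by_contra hne
      obtain ⟨ℓ, hℓ⟩ := SeparatingDual.exists_separating_of_ne (R := ℝ) hne
      exact hℓ (hb ℓ)
    exact hCFdisj x₁ hx₁C (hbx₁ ▸ hbF)
  · -- second conditional measure
    set ν₂ : Measure E := (μ K₀ᶜ)⁻¹ • μ.restrict K₀ᶜ with hν₂def
    have hcompl_ne_top : μ K₀ᶜ ≠ ⊤ := measure_ne_top μ _
    have hν₂prob : IsProbabilityMeasure ν₂ := by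
      constructor
      rw [hν₂def, Measure.smul_apply, Measure.restrict_apply MeasurableSet.univ,
        Set.univ_inter, smul_eq_mul, ENNReal.inv_mul_cancel hcompl hcompl_ne_top]
    have hν₂X : ν₂ Xᶜ = 0 := by
      rw [hν₂def, Measure.smul_apply, Measure.restrict_apply hXm.compl]
      have : μ (Xᶜ ∩ K₀ᶜ) = 0 :=
        le_antisymm (le_trans (measure_mono Set.inter_subset_left) hμXc.le) bot_le
      rw [this, smul_eq_mul, mul_zero]
    obtain ⟨x₂, hx₂X, hx₂⟩ := exists_barycenter' X hXcomp hXconv hXne ν₂ hν₂X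
    set mr : ℝ := (μ K₀ᶜ).toReal with hmr
    have hmrpos : 0 < mr := ENNReal.toReal_pos hcompl hcompl_ne_top
    have hsum1 : lr + mr = 1 := by
      rw [hlr, hmr, ← ENNReal.toReal_add hK₀ne_top hcompl_ne_top,
        measure_add_measure_compl hK₀m, measure_univ, ENNReal.toReal_one]
    have hint₂ : ∀ ℓ : E →L[ℝ] ℝ, ∫ x in K₀ᶜ, ℓ x ∂μ = mr * ℓ x₂ := by
      intro ℓ
      have h2 : ℓ x₂ = ∫ x, ℓ x ∂ν₂ := hx₂ ℓ
      rw [hν₂def, integral_smul_measure] at h2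
      rw [h2, ENNReal.toReal_inv, smul_eq_mul]
      field_simp
      rw [← hmr, mul_div_assoc, div_self hmrpos.ne', mul_one]
    have hb : ∀ ℓ : E →L[ℝ] ℝ, ℓ b = ℓ (lr • x₁ + mr • x₂) := by
      intro ℓ
      rw [hbℓ ℓ, ← integral_add_compl hK₀m (hμint ℓ), hint₁ ℓ, hint₂ ℓ,
        map_add, ℓ.map_smul, ℓ.map_smul, smul_eq_mul, smul_eq_mul]
    have hbeq : b = lr • x₁ + mr • x₂ := by
      by_contra hne
      obtain ⟨ℓ, hℓ⟩ := SeparatingDual.exists_separating_of_ne (R := ℝ) hne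
      exact hℓ (hb ℓ)
    have hseg : b ∈ openSegment ℝ x₁ x₂ := ⟨lr, mr, hlrpos, hmrpos, hsum1, hbeq.symm⟩
    have hx₁X : x₁ ∈ X := hx₁C.2
    have := hFface.2 hx₁X hx₂X hbF hseg
    exact hCFdisj x₁ hx₁C this
end

section
/- Let E be a real Hausdorff locally convex topological vector space whose continuous linear functionals separate points, and let X ⊆ E be a nonempty compact convex set that is metrizable as a topological space. Then the Choquet order is antisymmetric on Borel probability measures on X: if μ ≼ ν and ν ≼ μ, then μ = ν. -/
open Set MeasureTheory TopologicalSpace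
open scoped NNReal ENNReal

/-- The Choquet order on Borel probability measures concentrated on a compact convex set `X`:
`μ ≼ ν` iff `∫ f dμ ≤ ∫ f dν` for every continuous convex function `f` on `X`. -/
def ChoquetLE {E : Type*} [AddCommGroup E] [Module ℝ E] [TopologicalSpace E]
    [MeasurableSpace E] (X : Set E) (μ ν : MeasureTheory.Measure E) : Prop :=
  ∀ f : E → ℝ, ContinuousOn f X →
    (∀ x ∈ X, ∀ y ∈ X, ∀ t ∈ Set.Icc (0:ℝ) 1,
      f (t • x + (1 - t) • y) ≤ t * f x + (1 - t) * f y) →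
    (∫ x in X, f x ∂μ) ≤ ∫ x in X, f x ∂ν

section aux

variable {E : Type*} [AddCommGroup E] [Module ℝ E] [TopologicalSpace E]
    [IsTopologicalAddGroup E] [ContinuousSMul ℝ E] [T2Space E]
    [MeasurableSpace E] [BorelSpace E]
    {X : Set E}

/-- Convexity predicate for continuous maps on the subtype. -/
def CvxOn (X : Set E) (g : C(X, ℝ)) : Prop :=
  ∀ (x y : X) (t : ℝ), t ∈ Set.Icc (0:ℝ) 1 →
    ∀ (h : t • (x:E) + (1 - t) • (y:E) ∈ X),
      g ⟨_, h⟩ ≤ t * g x + (1 - t) * g y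

lemma integral_le_of_cvx (hXmeas : MeasurableSet X) (hXconv : Convex ℝ X)
    (μ ν : Measure E) (hμν : ChoquetLE X μ ν) (g : C(X, ℝ)) (hg : CvxOn X g) :
    ∫ x : X, g x ∂(μ.comap Subtype.val) ≤ ∫ x : X, g x ∂(ν.comap Subtype.val) := by
  classical
  set G : E → ℝ := fun e => if h : e ∈ X then g ⟨e, h⟩ else 0 with hG
  have hGX : ∀ x : X, G x = g x := fun x => dif_pos x.2
  have hGcont : ContinuousOn G X := by
    rw [continuousOn_iff_continuous_restrict]
    have : X.domRestrict G = g := funext fun x => hGX x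
    rw [this]; exact g.continuous
  have hGconv : ∀ x ∈ X, ∀ y ∈ X, ∀ t ∈ Set.Icc (0:ℝ) 1,
      G (t • x + (1 - t) • y) ≤ t * G x + (1 - t) * G y := by
    intro x hx y hy t ht
    have hmem : t • x + (1 - t) • y ∈ X :=
      hXconv hx hy ht.1 (by linarith [ht.2]) (by ring)
    rw [show G x = g ⟨x, hx⟩ from dif_pos hx, show G y = g ⟨y, hy⟩ from dif_pos hy,
      show G (t • x + (1 - t) • y) = g ⟨_, hmem⟩ from dif_pos hmem]
    exact hg ⟨x, hx⟩ ⟨y, hy⟩ t ht hmem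
  have h1 : ∫ x : X, g x ∂(μ.comap Subtype.val) = ∫ x in X, G x ∂μ := by
    rw [← integral_subtype_comap hXmeas G]
    exact integral_congr_ae (Filter.Eventually.of_forall fun x => (hGX x).symm)
  have h2 : ∫ x : X, g x ∂(ν.comap Subtype.val) = ∫ x in X, G x ∂ν := by
    rw [← integral_subtype_comap hXmeas G]
    exact integral_congr_ae (Filter.Eventually.of_forall fun x => (hGX x).symm)
  rw [h1, h2]
  exact hμν G hGcont hGconv

end aux

/-- On a metrizable compact convex set, the Choquet order is antisymmetric: two Borel
probability measures on `X` dominating each other are equal. -/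
theorem choquetLE_antisymm
    {E : Type*} [AddCommGroup E] [Module ℝ E] [TopologicalSpace E]
    [IsTopologicalAddGroup E] [ContinuousSMul ℝ E] [T2Space E]
    [LocallyConvexSpace ℝ E] [SeparatingDual ℝ E]
    [MeasurableSpace E] [BorelSpace E]
    (X : Set E) (hXne : X.Nonempty) (hXcomp : IsCompact X) (hXconv : Convex ℝ X)
    [TopologicalSpace.MetrizableSpace X]
    (μ ν : Measure E) [IsProbabilityMeasure μ] [IsProbabilityMeasure ν]
    (hμX : μ X = 1) (hνX : ν X = 1)
    (hμν : ChoquetLE X μ ν) (hνμ : ChoquetLE X ν μ) :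
    μ = ν := by
  classical
  have hXclosed : IsClosed X := hXcomp.isClosed
  have hXmeas : MeasurableSet X := hXclosed.measurableSet
  haveI : CompactSpace X := isCompact_iff_compactSpace.mp hXcomp
  set μ' : Measure X := μ.comap Subtype.val with hμ'
  set ν' : Measure X := ν.comap Subtype.val with hν'
  have hemb : MeasurableEmbedding (Subtype.val : X → E) :=
    MeasurableEmbedding.subtype_coe hXmeas
  haveI : IsFiniteMeasure μ' := by
    constructor
    rw [hμ', MeasurableEmbedding.comap_apply hemb]
    exact lt_of_le_of_lt (measure_mono (Set.image_subset_range _ _)) (by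
      rw [Subtype.range_coe]; rw [hμX]; exact ENNReal.one_lt_top)
  haveI : IsFiniteMeasure ν' := by
    constructor
    rw [hν', MeasurableEmbedding.comap_apply hemb]
    exact lt_of_le_of_lt (measure_mono (Set.image_subset_range _ _)) (by
      rw [Subtype.range_coe]; rw [hνX]; exact ENNReal.one_lt_top)
  -- every continuous map on X is integrable
  have hint : ∀ (m : Measure X) [IsFiniteMeasure m] (f : C(X, ℝ)), Integrable f m := by
    intro m _ f
    apply f.continuous.integrable_of_hasCompactSupport
    exact IsCompact.of_isClosed_subset isCompact_univ (isClosed_tsupport _) (Set.subset_univ _)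
  -- the set of functions with equal integrals
  set D : Set C(X, ℝ) := {f | ∫ x, f x ∂μ' = ∫ x, f x ∂ν'} with hD
  -- D is closed
  have hIcont : ∀ (m : Measure X) [IsFiniteMeasure m],
      Continuous fun f : C(X, ℝ) => ∫ x, f x ∂m := by
    intro m _
    apply Metric.continuous_iff.mpr
    intro f ε hε
    rcases eq_or_ne (m Set.univ) 0 with hm | hm
    · refine ⟨1, one_pos, fun g _ => ?_⟩
      have : m = 0 := by
        ext s hs
        exact le_antisymm (le_trans (measure_mono (Set.subset_univ s)) hm.le) (by simp)
      simp [this, hε]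
    · set c : ℝ := (m Set.univ).toReal with hc
      have hc0 : 0 < c := ENNReal.toReal_pos hm (measure_ne_top m _)
      refine ⟨ε / c, div_pos hε hc0, fun g hg => ?_⟩
      have key : ‖∫ x, g x ∂m - ∫ x, f x ∂m‖ ≤ (dist g f) * c := by
        rw [← integral_sub (hint m g) (hint m f)]
        apply norm_integral_le_of_norm_le_const
        filter_upwards with x
        calc ‖g x - f x‖ = dist (g x) (f x) := by rw [dist_eq_norm]
          _ ≤ dist g f := ContinuousMap.dist_apply_le_dist x
      rw [Real.dist_eq]
      calc |∫ x, g x ∂m - ∫ x, f x ∂m| ≤ dist g f * c := key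
        _ < (ε / c) * c := mul_lt_mul_of_pos_right hg hc0
        _ = ε := div_mul_cancel₀ ε hc0.ne'
  have hDclosed : IsClosed D := isClosed_eq (hIcont μ') (hIcont ν')
  -- the lattice L of differences of convex functions
  set L : Set C(X, ℝ) := {f | ∃ g h : C(X, ℝ), CvxOn X g ∧ CvxOn X h ∧ f = g - h} with hL
  have hcvx_integral : ∀ g : C(X, ℝ), CvxOn X g → ∫ x, g x ∂μ' = ∫ x, g x ∂ν' :=
    fun g hg => le_antisymm (integral_le_of_cvx hXmeas hXconv μ ν hμν g hg)
      (integral_le_of_cvx hXmeas hXconv ν μ hνμ g hg)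
  have hLD : L ⊆ D := by
    rintro f ⟨g, h, hg, hh, rfl⟩
    show ∫ x, (g - h) x ∂μ' = ∫ x, (g - h) x ∂ν'
    simp only [ContinuousMap.sub_apply]
    rw [integral_sub (hint μ' g) (hint μ' h), integral_sub (hint ν' g) (hint ν' h),
      hcvx_integral g hg, hcvx_integral h hh]
  have hCvx_add : ∀ g h : C(X, ℝ), CvxOn X g → CvxOn X h → CvxOn X (g + h) := by
    intro g h hg hh x y t ht hm
    have := hg x y t ht hm
    have := hh x y t ht hm
    simp only [ContinuousMap.add_apply]
    nlinarith
  have hCvx_sup : ∀ g h : C(X, ℝ), CvxOn X g → CvxOn X h → CvxOn X (g ⊔ h) := by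
    intro g h hg hh x y t ht hm
    have h1 := hg x y t ht hm
    have h2 := hh x y t ht hm
    have ht0 : (0:ℝ) ≤ t := ht.1
    have ht1 : (0:ℝ) ≤ 1 - t := by linarith [ht.2]
    simp only [ContinuousMap.sup_apply]
    apply max_le
    · calc g ⟨_, hm⟩ ≤ t * g x + (1 - t) * g y := h1
        _ ≤ t * max (g x) (h x) + (1 - t) * max (g y) (h y) := by
            gcongr <;> [exact le_max_left _ _; exact le_max_left _ _]
    · calc h ⟨_, hm⟩ ≤ t * h x + (1 - t) * h y := h2
        _ ≤ t * max (g x) (h x) + (1 - t) * max (g y) (h y) := by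
            gcongr <;> [exact le_max_right _ _; exact le_max_right _ _]
  have hL_sup : ∀ f ∈ L, ∀ g ∈ L, f ⊔ g ∈ L := by
    rintro f ⟨g1, h1, hg1, hh1, rfl⟩ f' ⟨g2, h2, hg2, hh2, rfl⟩
    refine ⟨(g1 + h2) ⊔ (g2 + h1), h1 + h2, hCvx_sup _ _ (hCvx_add _ _ hg1 hh2)
      (hCvx_add _ _ hg2 hh1), hCvx_add _ _ hh1 hh2, ?_⟩
    ext x
    simp only [ContinuousMap.sup_apply, ContinuousMap.sub_apply, ContinuousMap.add_apply]
    rcases le_total (g1 x - h1 x) (g2 x - h2 x) with hle | hle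
    · rw [max_eq_right hle, max_eq_right (by linarith)]; ring
    · rw [max_eq_left hle, max_eq_left (by linarith)]; ring
  have hL_inf : ∀ f ∈ L, ∀ g ∈ L, f ⊓ g ∈ L := by
    rintro f ⟨g1, h1, hg1, hh1, rfl⟩ f' ⟨g2, h2, hg2, hh2, rfl⟩
    refine ⟨g1 + g2, (h1 + g2) ⊔ (h2 + g1), hCvx_add _ _ hg1 hg2,
      hCvx_sup _ _ (hCvx_add _ _ hh1 hg2) (hCvx_add _ _ hh2 hg1), ?_⟩
    ext x
    simp only [ContinuousMap.inf_apply, ContinuousMap.sup_apply, ContinuousMap.sub_apply,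
      ContinuousMap.add_apply]
    rcases le_total (g1 x - h1 x) (g2 x - h2 x) with hle | hle
    · rw [min_eq_left hle, max_eq_left (by linarith)]; ring
    · rw [min_eq_right hle, max_eq_right (by linarith)]; ring
  -- affine functions are in L
  have haffine : ∀ (ℓ : E →L[ℝ] ℝ) (a c : ℝ),
      (⟨fun x : X => a * ℓ x + c, by fun_prop⟩ : C(X, ℝ)) ∈ L := by
    intro ℓ a c
    have hcvx : CvxOn X (⟨fun x : X => a * ℓ x + c, by fun_prop⟩ : C(X, ℝ)) := by
      intro x y t ht hm
      simp only [ContinuousMap.coe_mk]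
      rw [map_add, ℓ.map_smul, ℓ.map_smul]
      simp only [smul_eq_mul]
      exact le_of_eq (by ring)
    have hzero : CvxOn X (0 : C(X, ℝ)) := by
      intro x y t ht hm
      simp only [ContinuousMap.zero_apply]
      nlinarith [ht.1, ht.2]
    exact ⟨_, 0, hcvx, hzero, by ext x; simp⟩
  -- L separates points strongly
  have hsep : L.SeparatesPointsStrongly := by
    intro v x y
    rcases eq_or_ne x y with rfl | hxy
    · refine ⟨_, haffine 0 0 (v x), ?_, ?_⟩ <;> simp
    · have hxy' : (x : E) ≠ (y : E) := fun h => hxy (Subtype.ext h)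
      obtain ⟨ℓ, hℓ⟩ := SeparatingDual.exists_separating_of_ne (R := ℝ) hxy'
      set a : ℝ := (v x - v y) / (ℓ x - ℓ y) with ha
      set c : ℝ := v x - a * ℓ x with hc
      have hne : ℓ (x : E) - ℓ (y : E) ≠ 0 := sub_ne_zero_of_ne hℓ
      refine ⟨_, haffine ℓ a c, ?_, ?_⟩
      · simp only [ContinuousMap.coe_mk]; rw [hc]; ring
      · simp only [ContinuousMap.coe_mk]
        rw [hc, ha]
        field_simp
        ring
  -- Stone–Weierstrass: L is dense
  have hLne : L.Nonempty := ⟨_, haffine 0 0 0⟩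
  have hclosure := ContinuousMap.sublattice_closure_eq_top L hLne hL_inf hL_sup hsep
  have hDall : ∀ f : C(X, ℝ), f ∈ D := by
    intro f
    have : f ∈ closure L := by rw [hclosure]; trivial
    exact hDclosed.closure_subset_iff.mpr hLD this
  -- conclude μ' = ν'
  have hμν' : μ' = ν' := by
    apply MeasureTheory.ext_of_forall_lintegral_eq_of_IsFiniteMeasure
    intro f
    have hf : (fun x : X => ((f x : ℝ≥0) : ℝ)) = fun x => (f x : ℝ) := rfl
    have hmem := hDall ⟨fun x : X => ((f x : ℝ≥0) : ℝ), by fun_prop⟩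
    simp only [hD, Set.mem_setOf_eq, ContinuousMap.coe_mk] at hmem
    rw [lintegral_coe_eq_integral (fun x => f x)
        (hint μ' ⟨fun x : X => ((f x : ℝ≥0) : ℝ), by fun_prop⟩),
      lintegral_coe_eq_integral (fun x => f x)
        (hint ν' ⟨fun x : X => ((f x : ℝ≥0) : ℝ), by fun_prop⟩)]
    exact congrArg ENNReal.ofReal hmem
  -- conclude μ = ν
  have hres : μ.restrict X = ν.restrict X := by
    rw [← map_comap_subtype_coe hXmeas μ, ← map_comap_subtype_coe hXmeas ν,
      ← hμ', ← hν', hμν']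
  have hμr : μ.restrict X = μ := by
    apply Measure.restrict_eq_self_of_ae_mem
    rw [Filter.eventually_iff, mem_ae_iff]
    simp only [compl_setOf, not_not]
    have : μ Xᶜ = 0 := by
      have := measure_compl hXmeas (by rw [hμX]; exact ENNReal.one_ne_top)
      rw [hμX, measure_univ] at this
      simpa using this
    exact this
  have hνr : ν.restrict X = ν := by
    apply Measure.restrict_eq_self_of_ae_mem
    rw [Filter.eventually_iff, mem_ae_iff]
    simp only [compl_setOf, not_not]
    have : ν Xᶜ = 0 := by
      have := measure_compl hXmeas (by rw [hνX]; exact ENNReal.one_ne_top)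
      rw [hνX, measure_univ] at this
      simpa using this
    exact this
  rw [← hμr, ← hνr, hres]
end

section
/- Let E be a real Hausdorff locally convex topological vector space whose continuous linear functionals separate points, let X ⊆ E be a nonempty compact convex set that is metrizable as a topological space, let μ be a boundary measure on X, and let A ⊆ X be a Borel set with μ(A) > 0. Then the normalized conditional measure μ_A, defined by μ_A(B) = μ(A ∩ B)/μ(A) for Borel B ⊆ X, is also a boundary measure on X. -/
open Set MeasureTheory

/-- The normalized conditional measure `μ_A = μ(A ∩ ·)/μ(A)` of a boundary measure `μ` on a
metrizable compact convex set `X`, with respect to a Borel set `A ⊆ X` of positive measure,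
is again a boundary measure on `X`. -/
theorem conditional_of_boundary_measure
    {E : Type*} [AddCommGroup E] [Module ℝ E] [TopologicalSpace E]
    [IsTopologicalAddGroup E] [ContinuousSMul ℝ E] [T2Space E]
    [LocallyConvexSpace ℝ E] [SeparatingDual ℝ E]
    [MeasurableSpace E] [BorelSpace E]
    (X : Set E) (hXne : X.Nonempty) (hXcomp : IsCompact X) (hXconv : Convex ℝ X)
    [TopologicalSpace.MetrizableSpace X]
    (μ : Measure E) [IsProbabilityMeasure μ] (hμX : μ X = 1)
    (hmax : ∀ ρ : Measure E, IsProbabilityMeasure ρ → ρ X = 1 → ChoquetLE X μ ρ → ρ = μ)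
    (A : Set E) (hAmeas : MeasurableSet A) (hAX : A ⊆ X) (hApos : 0 < μ A) :
    IsProbabilityMeasure ((μ A)⁻¹ • μ.restrict A) ∧
    ((μ A)⁻¹ • μ.restrict A) X = 1 ∧
    ∀ ρ : Measure E, IsProbabilityMeasure ρ → ρ X = 1 →
      ChoquetLE X ((μ A)⁻¹ • μ.restrict A) ρ → ρ = (μ A)⁻¹ • μ.restrict A := by
  have hXmeas : MeasurableSet X := hXcomp.isClosed.measurableSet
  have hc0 : μ A ≠ 0 := hApos.ne'
  have hc1 : μ A ≤ 1 := by
    calc μ A ≤ μ univ := measure_mono (subset_univ _)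
    _ = 1 := measure_univ
  have hcT : μ A ≠ ⊤ := (lt_of_le_of_lt hc1 ENNReal.one_lt_top).ne
  have hXA : X ∩ A = A := inter_eq_self_of_subset_right hAX
  have hinv : (μ A)⁻¹ * μ A = 1 := ENNReal.inv_mul_cancel hc0 hcT
  have hprob : IsProbabilityMeasure ((μ A)⁻¹ • μ.restrict A) := by
    constructor
    simp [Measure.smul_apply, Measure.restrict_apply_univ, smul_eq_mul, hinv]
  have hX1 : ((μ A)⁻¹ • μ.restrict A) X = 1 := by
    simp [Measure.smul_apply, Measure.restrict_apply hXmeas, hXA, smul_eq_mul, hinv]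
  refine ⟨hprob, hX1, ?_⟩
  intro ρ hρprob hρX h
  -- the competing measure
  set ρ' : Measure E := μ A • ρ + μ.restrict Aᶜ with hρ'def
  have hcomplX : (μ.restrict Aᶜ) X = 1 - μ A := by
    rw [Measure.restrict_apply hXmeas, ← Set.diff_eq,
      measure_diff hAX hAmeas.nullMeasurableSet hcT, hμX]
  have hρ'prob : IsProbabilityMeasure ρ' := by
    constructor
    have : (μ.restrict Aᶜ) univ = 1 - μ A := by
      rw [Measure.restrict_apply_univ, measure_compl hAmeas hcT, measure_univ]
    simp only [hρ'def, Measure.add_apply, Measure.smul_apply, smul_eq_mul, this,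
      measure_univ, mul_one]
    exact add_tsub_cancel_of_le hc1
  have hρ'X : ρ' X = 1 := by
    simp only [hρ'def, Measure.add_apply, Measure.smul_apply, smul_eq_mul, hρX, mul_one,
      hcomplX]
    exact add_tsub_cancel_of_le hc1
  -- ChoquetLE X μ ρ'
  have hch : ChoquetLE X μ ρ' := by
    intro f hf hconv
    obtain ⟨C, hC⟩ := hXcomp.exists_bound_of_continuousOn hf
    have hint : ∀ ν : Measure E, IsFiniteMeasure (ν.restrict X) →
        Integrable f (ν.restrict X) := by
      intro ν hν
      refine ⟨(hf.aemeasurable hXmeas).aestronglyMeasurable, ?_⟩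
      exact HasFiniteIntegral.of_bounded ((ae_restrict_mem hXmeas).mono fun x hx => hC x hx)
    have hintA : Integrable f ((μ.restrict A).restrict X) := hint _ inferInstance
    have hintAc : Integrable f ((μ.restrict Aᶜ).restrict X) := hint _ inferInstance
    have hintρ : Integrable f (ρ.restrict X) := hint _ inferInstance
    -- split the integral of μ
    have hsplit : (∫ x in X, f x ∂μ) =
        (∫ x in X, f x ∂(μ.restrict A)) + ∫ x in X, f x ∂(μ.restrict Aᶜ) := by
      conv_lhs => rw [← Measure.restrict_add_restrict_compl (μ := μ) hAmeas]
      rw [show ((μ.restrict A + μ.restrict Aᶜ).restrict X) =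
        (μ.restrict A).restrict X + (μ.restrict Aᶜ).restrict X from Measure.restrict_add _ _ _,
        integral_add_measure hintA hintAc]
    -- the Choquet inequality for μ_A scaled by μ A
    have hAkey : (∫ x in X, f x ∂(μ.restrict A)) ≤ (μ A).toReal * ∫ x in X, f x ∂ρ := by
      have h1 := h f hf hconv
      have h2 : (∫ x in X, f x ∂((μ A)⁻¹ • μ.restrict A)) =
          ((μ A)⁻¹).toReal * ∫ x in X, f x ∂(μ.restrict A) := by
        rw [Measure.restrict_smul, integral_smul_measure, smul_eq_mul]
      rw [h2] at h1
      have h3 : (μ A).toReal * (((μ A)⁻¹).toReal * ∫ x in X, f x ∂(μ.restrict A)) ≤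
          (μ A).toReal * ∫ x in X, f x ∂ρ :=
        mul_le_mul_of_nonneg_left h1 ENNReal.toReal_nonneg
      have h4 : (μ A).toReal * ((μ A)⁻¹).toReal = 1 := by
        rw [← ENNReal.toReal_mul, ENNReal.mul_inv_cancel hc0 hcT, ENNReal.toReal_one]
      rwa [← mul_assoc, h4, one_mul] at h3
    -- compute the integral of ρ'
    have hρ'int : (∫ x in X, f x ∂ρ') =
        (μ A).toReal * (∫ x in X, f x ∂ρ) + ∫ x in X, f x ∂(μ.restrict Aᶜ) := by
      rw [hρ'def, show ((μ A • ρ + μ.restrict Aᶜ).restrict X) =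
          (μ A • ρ).restrict X + (μ.restrict Aᶜ).restrict X from Measure.restrict_add _ _ _,
        Measure.restrict_smul,
        integral_add_measure (hintρ.smul_measure hcT) hintAc,
        integral_smul_measure, smul_eq_mul]
    rw [hsplit, hρ'int]
    exact add_le_add_left hAkey _
  -- by maximality, ρ' = μ
  have heq : ρ' = μ := hmax ρ' hρ'prob hρ'X hch
  -- cancel to conclude ρ = μ_A
  refine Measure.ext fun S hS => ?_
  have h0 : ρ' S = μ S := by rw [heq]
  simp only [hρ'def, Measure.add_apply, Measure.smul_apply, smul_eq_mul,
    Measure.restrict_apply hS] at h0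
  have hd : μ (S ∩ A) + μ (S ∩ Aᶜ) = μ S := by
    rw [← Set.diff_eq]
    exact measure_inter_add_diff S hAmeas
  have h3 : μ A * ρ S = μ (S ∩ A) :=
    WithTop.add_right_cancel (measure_lt_top μ (S ∩ Aᶜ)).ne (h0.trans hd.symm)
  have : ρ S = (μ A)⁻¹ * μ (S ∩ A) := by
    rw [← h3, ← mul_assoc, hinv, one_mul]
  rw [this, Measure.smul_apply, Measure.restrict_apply hS, smul_eq_mul]
end

section
/- Let X be a compact Hausdorff topological space, let μ be a regular (Radon) Borel probability measure on X, and let A ⊆ X be an arbitrary subset such that μ concentrates on A with respect to the Baire σ-algebra: μ(B) = 0 for every Baire-measurable set B ⊆ X with B ∩ A = ∅. Then for every Gδ set B ⊆ X (a countable intersection of open sets) with B ∩ A = ∅, one has μ(B) = 0. -/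
open MeasureTheory

/-- The Baire σ-algebra of a topological space: the smallest σ-algebra making every continuous
real-valued function measurable. -/
def baireMeasurableSpace (X : Type*) [TopologicalSpace X] : MeasurableSpace X :=
  ⨆ f : C(X, ℝ), MeasurableSpace.comap f (borel ℝ)

/-- If a regular Borel probability measure on a compact Hausdorff space concentrates on a set
`A` with respect to the Baire σ-algebra (every Baire set disjoint from `A` is null), then every
Gδ set disjoint from `A` is null. -/
theorem null_gdelta_of_baire_concentrated
    {X : Type*} [TopologicalSpace X] [CompactSpace X] [T2Space X]
    [MeasurableSpace X] [BorelSpace X]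
    (μ : Measure X) [IsProbabilityMeasure μ] [μ.Regular]
    (A : Set X)
    (hconc : ∀ B : Set X, MeasurableSet[baireMeasurableSpace X] B → B ∩ A = ∅ → μ B = 0)
    (B : Set X) (hB : IsGδ B) (hBA : B ∩ A = ∅) :
    μ B = 0 := by
  -- write B as a countable intersection of open sets
  obtain ⟨U, hUopen, rfl⟩ := hB.eq_iInter_nat
  -- it suffices to show every compact subset of B is null
  by_contra hpos
  obtain ⟨K, hKB, hKcomp, hKpos⟩ :=
    (MeasurableSet.iInter fun n => (hUopen n).measurableSet).exists_lt_isCompact_of_ne_top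
      (measure_ne_top μ _) (pos_iff_ne_zero.mpr hpos : (0 : ENNReal) < _)
  -- for each n, find a continuous function equal to 1 on K and 0 outside U n
  have hf : ∀ n : ℕ, ∃ f : C(X, ℝ), K ⊆ f ⁻¹' {1} ∧ f ⁻¹' {1} ⊆ U n := by
    intro n
    have hKU : K ⊆ U n := hKB.trans (Set.iInter_subset U n)
    obtain ⟨f, hf0, hf1, -⟩ := exists_continuous_zero_one_of_isClosed
      (hUopen n).isClosed_compl hKcomp.isClosed
      (Set.disjoint_compl_left_iff_subset.mpr hKU)
    refine ⟨f, fun x hx => hf1 hx, fun x hx => ?_⟩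
    by_contra hxU
    have h0 := hf0 hxU
    simp only [Set.mem_preimage, Set.mem_singleton_iff] at hx
    simp [hx] at h0
  choose f hf1 hfU using hf
  -- the set ⋂ n, f n ⁻¹' {1} is a Baire set containing K and contained in B
  set S : Set X := ⋂ n, (f n) ⁻¹' {1} with hS
  have hSBaire : MeasurableSet[baireMeasurableSpace X] S := by
    refine MeasurableSet.iInter fun n => ?_
    have h1s : MeasurableSet[borel ℝ] ({1} : Set ℝ) := by
      rw [← BorelSpace.measurable_eq]; exact measurableSet_singleton 1
    have h1 : MeasurableSet[MeasurableSpace.comap (f n) (borel ℝ)] ((f n) ⁻¹' {1}) :=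
      ⟨{1}, h1s, rfl⟩
    exact le_iSup (fun g : C(X, ℝ) => MeasurableSpace.comap g (borel ℝ)) (f n) _ h1
  have hSB : S ⊆ ⋂ n, U n := Set.iInter_mono fun n => hfU n
  have hSA : S ∩ A = ∅ := Set.subset_empty_iff.mp (hBA ▸ Set.inter_subset_inter_left A hSB)
  have hKS : K ⊆ S := Set.subset_iInter fun n => hf1 n
  have : μ K = 0 := measure_mono_null hKS (hconc S hSBaire hSA)
  simp [this] at hKpos
end
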